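/- arXiv:2008.08559 — 11 statements merged into one kernel-verified Lean document; each statement's English description precedes it below -/
import Mathlib

section
/- For rank-one orthogonal projections P and Q on ℂ², the squared operator norm of P - Q equals 1 - tr(PQ), which also equals -det(P - Q), and equals 1 - ‖(1-P) - Q‖². -/
noncomputable section

/-- An effect on a complex Hilbert space: a positive operator below the identity. -/
def IsEffect {H : Type*} [NormedAddCommGroup H] [InnerProductSpace ℂ H] [CompleteSpace H]
    (A : H →L[ℂ] H) : Prop :=
  A.IsPositive ∧ ((1 : H →L[ℂ] H) - A).IsPositive

/-- Effects `A`, `B` are coexistent: there are effects `M ≤ A`, `N ≤ I - A` with `M + N = B`. -/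
def Coexistent {H : Type*} [NormedAddCommGroup H] [InnerProductSpace ℂ H] [CompleteSpace H]
    (A B : H →L[ℂ] H) : Prop :=
  ∃ M N : H →L[ℂ] H, IsEffect M ∧ IsEffect N ∧
    (A - M).IsPositive ∧ (((1 : H →L[ℂ] H) - A) - N).IsPositive ∧ M + N = B

/-- A rank-one orthogonal projection. -/
def IsRankOneProjection {H : Type*} [NormedAddCommGroup H] [InnerProductSpace ℂ H]
    [CompleteSpace H] (P : H →L[ℂ] H) : Prop :=
  IsSelfAdjoint P ∧ P ∘L P = P ∧ Module.finrank ℂ (LinearMap.range (P : H →ₗ[ℂ] H)) = 1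

/-- The strength function `Λ(B,P) = sup {λ ≥ 0 : λP ≤ B}`. -/
def strength {H : Type*} [NormedAddCommGroup H] [InnerProductSpace ℂ H] [CompleteSpace H]
    (B P : H →L[ℂ] H) : ℝ :=
  sSup {l : ℝ | 0 ≤ l ∧ (B - (l : ℂ) • P).IsPositive}

abbrev E2 := EuclideanSpace ℂ (Fin 2)

/-!
For rank-one projections `P`, `Q` on `ℂ²` the difference `D = P - Q` is self-adjoint and
traceless, so Cayley–Hamilton gives `D² = -det D • 1`; taking traces,
`-2 det D = tr D² = 2 - 2 tr (PQ)`. Hence `D*D = D²` is the scalar `1 - tr (PQ)`, which by the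
C*-identity is `‖D‖²`. Since `1 - P` is again a rank-one projection and
`tr ((1 - P) Q) = 1 - tr (PQ)`, the same identity for `(1 - P) - Q` gives the last equation.
-/

open Module LinearMap Polynomial

section CayleyHamilton

variable {R M : Type*} [CommRing R] [Nontrivial R] [AddCommGroup M] [Module R M]
  [Module.Free R M] [Module.Finite R M]

theorem LinearMap.mul_self_eq_of_finrank_eq_two (hM : finrank R M = 2) (f : Module.End R M) :
    f * f = trace R M f • f - LinearMap.det f • 1 := by
  have h := aeval_self_charpoly f
  rw [← charpoly_toMatrix f (finBasisOfFinrankEq R M hM), Matrix.charpoly_fin_two,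
    ← trace_eq_matrix_trace, det_toMatrix] at h
  simp only [map_add, map_sub, map_mul, aeval_C, aeval_X, Algebra.algebraMap_eq_smul_one, sq,
    smul_mul_assoc, one_mul] at h
  rw [← sub_eq_zero, ← h]
  abel

end CayleyHamilton

section Idempotent

variable {K V : Type*} [Field K] [AddCommGroup V] [Module K V]

theorem LinearMap.trace_eq_one_of_isIdempotentElem [FiniteDimensional K V] {p : Module.End K V}
    (hp : IsIdempotentElem p) (hrank : finrank K (range p) = 1) : trace K V p = 1 := by
  rw [hp.isProj_range.trace, hrank, Nat.cast_one]

variable [CharZero K] {p q : Module.End K V} (hV : finrank K V = 2) (hp : IsIdempotentElem p)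
  (hq : IsIdempotentElem q) (hp₁ : trace K V p = 1) (hq₁ : trace K V q = 1)
include hV hp hq hp₁ hq₁

theorem LinearMap.det_sub_eq_of_isIdempotentElem :
    LinearMap.det (p - q) = trace K V (p * q) - 1 := by
  have : FiniteDimensional K V := .of_finrank_eq_succ hV
  have htr := congrArg (trace K V) (mul_self_eq_of_finrank_eq_two hV (p - q))
  simp only [sub_mul, mul_sub, hp.eq, hq.eq, map_sub, map_smul, trace_one, hV, hp₁, hq₁,
    trace_mul_comm K q p] at htr
  linear_combination htr / 2

theorem LinearMap.sub_mul_self_eq_of_isIdempotentElem :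
    (p - q) * (p - q) = (1 - trace K V (p * q)) • 1 := by
  have : FiniteDimensional K V := .of_finrank_eq_succ hV
  rw [mul_self_eq_of_finrank_eq_two hV, det_sub_eq_of_isIdempotentElem hV hp hq hp₁ hq₁,
    map_sub, hp₁, hq₁]
  module

end Idempotent

theorem IsSelfAdjoint.norm_sq_eq_of_mul_self_eq_smul_one {𝕜 H : Type*} [RCLike 𝕜]
    [NormedAddCommGroup H] [InnerProductSpace 𝕜 H] [CompleteSpace H] [Nontrivial H]
    {T : H →L[𝕜] H} (hT : IsSelfAdjoint T) {c : 𝕜} (hc : T * T = c • 1) :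
    (‖T‖ : 𝕜) ^ 2 = c := by
  let _ : NormedSpace ℝ H := .restrictScalars ℝ 𝕜 H
  obtain ⟨v, hv⟩ := exists_norm_eq H zero_le_one
  have hc_eq : c = ((‖T v‖ ^ 2 : ℝ) : 𝕜) := by
    calc c = inner 𝕜 v ((c • (1 : H →L[𝕜] H)) v) := by simp [inner_smul_right, hv]
      _ = inner 𝕜 (T v) (T v) := by
        rw [← hc, mul_apply_eq_comp]; exact (hT.isSymmetric v (T v)).symm
      _ = _ := by rw [inner_self_eq_norm_sq_to_K]; push_cast; rfl
  have hnorm : ‖T‖ ^ 2 = ‖T v‖ ^ 2 := by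
    rw [sq, ← CStarRing.norm_star_mul_self, hT.star_eq, hc, norm_smul, norm_one, mul_one, hc_eq,
      RCLike.norm_ofReal, abs_of_nonneg (sq_nonneg _)]
  rw [hc_eq, ← hnorm]
  norm_cast

namespace IsRankOneProjection

variable {H : Type*} [NormedAddCommGroup H] [InnerProductSpace ℂ H] [CompleteSpace H]
  {P Q : H →L[ℂ] H}

theorem isIdempotentElem (hP : IsRankOneProjection P) : IsIdempotentElem P :=
  hP.2.1

theorem isIdempotentElem_toLinearMap (hP : IsRankOneProjection P) :
    IsIdempotentElem (P : Module.End ℂ H) :=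
  ContinuousLinearMap.isIdempotentElem_toLinearMap_iff.mpr hP.isIdempotentElem

theorem trace_eq_one [FiniteDimensional ℂ H] (hP : IsRankOneProjection P) :
    trace ℂ H (P : Module.End ℂ H) = 1 :=
  trace_eq_one_of_isIdempotentElem hP.isIdempotentElem_toLinearMap hP.2.2

variable (hH : finrank ℂ H = 2)
include hH

theorem one_sub (hP : IsRankOneProjection P) : IsRankOneProjection (1 - P) := by
  have : FiniteDimensional ℂ H := .of_finrank_eq_succ hH
  refine ⟨(IsSelfAdjoint.one _).sub hP.1, hP.isIdempotentElem.one_sub, ?_⟩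
  have hker := finrank_range_add_finrank_ker (P : Module.End ℂ H)
  rw [hP.2.2, hH] at hker
  rw [ContinuousLinearMap.toLinearMap_sub, ContinuousLinearMap.toLinearMap_one,
    ← hP.isIdempotentElem_toLinearMap.ker_eq_range_one_sub]
  omega

theorem det_sub (hP : IsRankOneProjection P) (hQ : IsRankOneProjection Q) :
    LinearMap.det ((P : Module.End ℂ H) - (Q : Module.End ℂ H)) =
      trace ℂ H (P ∘L Q : H →L[ℂ] H) - 1 :=
  have : FiniteDimensional ℂ H := .of_finrank_eq_succ hH
  det_sub_eq_of_isIdempotentElem hH hP.isIdempotentElem_toLinearMap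
    hQ.isIdempotentElem_toLinearMap hP.trace_eq_one hQ.trace_eq_one

theorem norm_sub_sq (hP : IsRankOneProjection P) (hQ : IsRankOneProjection Q) :
    (‖P - Q‖ : ℂ) ^ 2 = 1 - trace ℂ H (P ∘L Q : H →L[ℂ] H) := by
  have : FiniteDimensional ℂ H := .of_finrank_eq_succ hH
  have : Nontrivial H := Module.nontrivial_of_finrank_eq_succ hH
  refine (hP.1.sub hQ.1).norm_sq_eq_of_mul_self_eq_smul_one ?_
  apply ContinuousLinearMap.coe_injective
  exact sub_mul_self_eq_of_isIdempotentElem hH hP.isIdempotentElem_toLinearMap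
    hQ.isIdempotentElem_toLinearMap hP.trace_eq_one hQ.trace_eq_one

end IsRankOneProjection

theorem norm_sq_sub_of_rankOneProjections (P Q : E2 →L[ℂ] E2)
    (hP : IsRankOneProjection P) (hQ : IsRankOneProjection Q) :
    ((‖P - Q‖ : ℂ) ^ 2 = 1 - LinearMap.trace ℂ E2 ((P ∘L Q) : E2 →ₗ[ℂ] E2)) ∧
    ((‖P - Q‖ : ℂ) ^ 2 = - LinearMap.det ((P - Q) : E2 →ₗ[ℂ] E2)) ∧
    (‖P - Q‖ ^ 2 = 1 - ‖((1 : E2 →L[ℂ] E2) - P) - Q‖ ^ 2) := by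
  have hE : finrank ℂ E2 = 2 := finrank_euclideanSpace_fin
  have hPQ := hP.norm_sub_sq hE hQ
  have hcompl := (hP.one_sub hE).norm_sub_sq hE hQ
  have htrace : trace ℂ E2 (((1 : E2 →L[ℂ] E2) - P) ∘L Q : E2 →L[ℂ] E2) =
      1 - trace ℂ E2 (P ∘L Q : E2 →L[ℂ] E2) := by
    rw [ContinuousLinearMap.sub_comp, ← ContinuousLinearMap.mul_def, one_mul,
      ContinuousLinearMap.toLinearMap_sub, map_sub, hQ.trace_eq_one]
  refine ⟨hPQ, by rw [hPQ, hP.det_sub hE hQ]; ring, ?_⟩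
  rw [htrace] at hcompl
  apply Complex.ofReal_injective
  push_cast
  linear_combination hPQ + hcompl
end
end

section
/- For any two rank-one orthogonal projections P and Q on ℂ², there exists a rank-one orthogonal projection R on ℂ² such that ‖P - R‖ = ‖Q - R‖ = sin(π/4) = 1/√2. -/
noncomputable section

/-!
A rank-one projection is the orthogonal projection `P_u` onto the line through a unit vector `u`.
For unit vectors `u, v` the operator `A = P_u - P_v` vanishes on `(span {u, v})ᗮ` and satisfies
`A² = 1 - ‖⟪u, v⟫‖²` on `span {u, v}`, so `‖P_u - P_v‖ = √(1 - ‖⟪u, v⟫‖²)`. In `ℂ²` it therefore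
suffices to find a unit `v` with `‖⟪u, v⟫‖² = ‖⟪w, v⟫‖² = 1/2`: completing `u` to an orthonormal
basis `(u, u')`, take `v = (u + z u') / √2` with the phase `z` chosen to kill the cross term of
`‖⟪w, v⟫‖²`.
-/

open scoped InnerProductSpace ComplexConjugate

theorem isRankOneProjection_iff_exists_eq_starProjection {H : Type*} [NormedAddCommGroup H]
    [InnerProductSpace ℂ H] [CompleteSpace H] {P : H →L[ℂ] H} :
    IsRankOneProjection P ↔ ∃ u : H, ‖u‖ = 1 ∧ P = (ℂ ∙ u).starProjection := by
  constructor
  · rintro ⟨hsa, hidem, hrank⟩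
    obtain ⟨_, hP⟩ := isStarProjection_iff_eq_starProjection_range.mp ⟨hidem, hsa⟩
    have hne : LinearMap.range (P : H →ₗ[ℂ] H) ≠ ⊥ := by
      rintro h; rw [h, finrank_bot] at hrank; exact zero_ne_one hrank
    obtain ⟨w, hw, hw0⟩ := Submodule.exists_mem_ne_zero_of_ne_bot hne
    have hu : ‖(‖w‖⁻¹ : ℂ) • w‖ = 1 := norm_smul_inv_norm hw0
    have hrange := eq_span_singleton_of_mem_of_finrank_eq_one hrank
      (Submodule.smul_mem _ _ hw) (norm_ne_zero_iff.mp (hu ▸ one_ne_zero))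
    refine ⟨_, hu, ?_⟩
    rw [hP]
    congr!
  · rintro ⟨u, hu, rfl⟩
    refine ⟨isSelfAdjoint_starProjection _, (ℂ ∙ u).isIdempotentElem_starProjection, ?_⟩
    rw [Submodule.range_starProjection]
    exact finrank_span_singleton (norm_ne_zero_iff.mp (hu ▸ one_ne_zero))

theorem norm_starProjection_sub_starProjection_singleton {𝕜 E : Type*} [RCLike 𝕜]
    [NormedAddCommGroup E] [InnerProductSpace 𝕜 E] [CompleteSpace E] {u v : E}
    (hu : ‖u‖ = 1) (hv : ‖v‖ = 1) :
    ‖(𝕜 ∙ u).starProjection - (𝕜 ∙ v).starProjection‖ = √(1 - ‖⟪u, v⟫_𝕜‖ ^ 2) := by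
  set A := (𝕜 ∙ u).starProjection - (𝕜 ∙ v).starProjection
  set δ : ℝ := 1 - ‖⟪u, v⟫_𝕜‖ ^ 2
  have hA x : A x = ⟪u, x⟫_𝕜 • u - ⟪v, x⟫_𝕜 • v := by
    simp [A, Submodule.starProjection_unit_singleton 𝕜 hu,
      Submodule.starProjection_unit_singleton 𝕜 hv]
  have hcc : ⟪v, u⟫_𝕜 * ⟪u, v⟫_𝕜 = (‖⟪u, v⟫_𝕜‖ ^ 2 : ℝ) := by
    rw [← inner_conj_symm, RCLike.conj_mul]; norm_cast
  have hAu : A u = u - ⟪v, u⟫_𝕜 • v := by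
    rw [hA, inner_self_eq_one_of_norm_eq_one hu, one_smul]
  have hAv : A v = ⟪u, v⟫_𝕜 • u - v := by
    rw [hA, inner_self_eq_one_of_norm_eq_one hv, one_smul]
  have hAAu : A (A u) = (δ : 𝕜) • u := by
    rw [hAu, map_sub, map_smul, hAu, hAv, smul_sub, smul_smul, hcc]
    simp only [δ]; push_cast; module
  have hAAv : A (A v) = (δ : 𝕜) • v := by
    rw [hAv, map_sub, map_smul, hAu, hAv, smul_sub, smul_smul, mul_comm, hcc]
    simp only [δ]; push_cast; module
  have hAAA x : A (A (A x)) = (δ : 𝕜) • A x := by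
    rw [hA x, map_sub, map_sub, map_smul, map_smul, map_smul, map_smul, hAAu, hAAv, smul_sub,
      smul_comm (δ : 𝕜), smul_comm (δ : 𝕜)]
  set B := A * A
  have hB : B * B = (δ : 𝕜) • B := by
    ext x; exact hAAA (A x)
  have hA_sa : IsSelfAdjoint A :=
    (isSelfAdjoint_starProjection _).sub (isSelfAdjoint_starProjection _)
  have hB_sa : IsSelfAdjoint B := by
    simpa only [hA_sa.star_eq] using IsSelfAdjoint.star_mul_self A
  have hB_norm : ‖B‖ = ‖A‖ ^ 2 := by
    rw [sq, ← CStarRing.norm_star_mul_self, hA_sa.star_eq]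
  have hδ_nonneg : 0 ≤ δ := by
    have := norm_inner_le_norm (𝕜 := 𝕜) u v
    rw [hu, hv, one_mul] at this
    nlinarith [norm_nonneg ⟪u, v⟫_𝕜]
  -- `B² = δ B`, so by the C⋆-identity `‖B‖ ∈ {0, δ}`, and `B u = δ u` excludes `0` unless `δ = 0`.
  have hB_sq : ‖B‖ * ‖B‖ = δ * ‖B‖ := by
    rw [← CStarRing.norm_star_mul_self, hB_sa.star_eq, hB, norm_smul, RCLike.norm_ofReal,
      abs_of_nonneg hδ_nonneg]
  have hδ_le : δ ≤ ‖B‖ := by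
    have := B.le_opNorm u
    rwa [show B u = (δ : 𝕜) • u from hAAu, norm_smul, RCLike.norm_ofReal,
      abs_of_nonneg hδ_nonneg, hu, mul_one, mul_one] at this
  have hBδ : ‖B‖ = δ := by nlinarith
  rw [← hBδ, hB_norm, Real.sqrt_sq (norm_nonneg _)]

theorem Complex.exists_norm_eq_one_re_mul_eq_zero (c : ℂ) :
    ∃ z : ℂ, ‖z‖ = 1 ∧ (c * z).re = 0 := by
  refine ⟨exp (↑(Real.pi / 2 - arg c) * I), norm_exp_ofReal_mul_I _, ?_⟩
  nth_rw 1 [← norm_mul_exp_arg_mul_I c]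
  rw [mul_assoc, ← exp_add, ← add_mul]
  push_cast
  rw [add_sub_cancel, exp_mul_I]
  simp

theorem exists_norm_eq_one_sq_norm_inner_eq_half {E : Type*} [NormedAddCommGroup E]
    [InnerProductSpace ℂ E] (hE : Module.finrank ℂ E = 2) {u w : E} (hu : ‖u‖ = 1)
    (hw : ‖w‖ = 1) :
    ∃ v : E, ‖v‖ = 1 ∧ ‖⟪u, v⟫_ℂ‖ ^ 2 = 1 / 2 ∧ ‖⟪w, v⟫_ℂ‖ ^ 2 = 1 / 2 := by
  have : FiniteDimensional ℂ E := .of_finrank_pos (by omega)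
  obtain ⟨b, hb⟩ := Orthonormal.exists_orthonormalBasis_extension_of_card_eq (ι := Fin 2)
    (by rw [hE, Fintype.card_fin]) (v := fun _ ↦ u) (s := {0})
    ⟨fun _ ↦ hu, fun i j hij ↦ absurd (Subsingleton.elim i j) hij⟩
  obtain rfl : b 0 = u := hb 0 rfl
  have hparseval x : ‖⟪b 0, x⟫_ℂ‖ ^ 2 + ‖⟪b 1, x⟫_ℂ‖ ^ 2 = ‖x‖ ^ 2 := by
    rw [← b.sum_sq_norm_inner_right, Fin.sum_univ_two]
  obtain ⟨z, hz, hz_re⟩ :=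
    Complex.exists_norm_eq_one_re_mul_eq_zero (conj ⟪w, b 0⟫_ℂ * ⟪w, b 1⟫_ℂ)
  set s : ℂ := (((√2)⁻¹ : ℝ) : ℂ)
  have hs : ‖s‖ ^ 2 = 1 / 2 := by
    rw [Complex.norm_real, Real.norm_eq_abs, sq_abs, inv_pow, Real.sq_sqrt zero_le_two, one_div]
  have hinner x : ⟪x, s • (b 0 + z • b 1)⟫_ℂ = s * (⟪x, b 0⟫_ℂ + z * ⟪x, b 1⟫_ℂ) := by
    rw [inner_smul_right, inner_add_right, inner_smul_right]
  have hv0 : ‖⟪b 0, s • (b 0 + z • b 1)⟫_ℂ‖ ^ 2 = 1 / 2 := by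
    rw [hinner, b.orthonormal.2 (by decide : (0 : Fin 2) ≠ 1),
      inner_self_eq_one_of_norm_eq_one hu, mul_zero, add_zero, mul_one, hs]
  refine ⟨s • (b 0 + z • b 1), ?_, hv0, ?_⟩
  · have hv1 : ‖⟪b 1, s • (b 0 + z • b 1)⟫_ℂ‖ ^ 2 = 1 / 2 := by
      rw [hinner, b.orthonormal.2 (by decide : (1 : Fin 2) ≠ 0),
        inner_self_eq_one_of_norm_eq_one (b.orthonormal.1 1), zero_add, mul_one, norm_mul, hz,
        mul_one, hs]
    have := hparseval (s • (b 0 + z • b 1))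
    rwa [hv0, hv1, add_halves, eq_comm,
      pow_eq_one_iff_of_nonneg (norm_nonneg _) two_ne_zero] at this
  · have hcross : (⟪w, b 0⟫_ℂ * conj (z * ⟪w, b 1⟫_ℂ)).re = 0 := by
      rw [← hz_re, ← Complex.conj_re]
      congr 1
      simp only [map_mul, Complex.conj_conj]
      ring
    have hsum : ‖⟪w, b 0⟫_ℂ + z * ⟪w, b 1⟫_ℂ‖ ^ 2 = 1 := by
      rw [Complex.sq_norm, Complex.normSq_add, hcross, ← Complex.sq_norm, ← Complex.sq_norm,
        norm_mul, hz, one_mul, norm_inner_symm, norm_inner_symm w, hparseval, hw]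
      norm_num
    rw [hinner, norm_mul, mul_pow, hs, hsum, mul_one]

theorem exists_rankOneProjection_equidistant (P Q : E2 →L[ℂ] E2)
    (hP : IsRankOneProjection P) (hQ : IsRankOneProjection Q) :
    ∃ R : E2 →L[ℂ] E2, IsRankOneProjection R ∧
      ‖P - R‖ = Real.sin (Real.pi / 4) ∧ ‖Q - R‖ = Real.sin (Real.pi / 4) ∧
      Real.sin (Real.pi / 4) = 1 / Real.sqrt 2 := by
  obtain ⟨u, hu, rfl⟩ := isRankOneProjection_iff_exists_eq_starProjection.mp hP
  obtain ⟨w, hw, rfl⟩ := isRankOneProjection_iff_exists_eq_starProjection.mp hQ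
  obtain ⟨v, hv, hvu, hvw⟩ :=
    exists_norm_eq_one_sq_norm_inner_eq_half finrank_euclideanSpace_fin hu hw
  have hsin : Real.sin (Real.pi / 4) = 1 / √2 := by
    rw [Real.sin_pi_div_four, div_eq_div_iff (by norm_num) (by positivity),
      Real.mul_self_sqrt zero_le_two, one_mul]
  have hdist : √(1 - 1 / 2) = Real.sin (Real.pi / 4) := by
    rw [hsin, one_div (√2), ← Real.sqrt_inv]; norm_num
  refine ⟨_, isRankOneProjection_iff_exists_eq_starProjection.mpr ⟨v, hv, rfl⟩, ?_, ?_, hsin⟩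
  · rw [norm_starProjection_sub_starProjection_singleton hu hv, hvu, hdist]
  · rw [norm_starProjection_sub_starProjection_singleton hw hv, hvw, hdist]
end
end

section
/- Let P be a rank-one orthogonal projection on ℂ² and s ∈ [0,1]. The following are equivalent: (i) s = 1/√2; (ii) there exists a rank-one projection R with ‖P - R‖ = s and ‖P - (1-R)‖ = s; (iii) for every rank-one projection R with ‖P - R‖ = s, also ‖P - (1-R)‖ = s. -/
noncomputable section

open scoped InnerProductSpace ComplexConjugate

/-- The rank-one operator `x ↦ ⟪u, x⟫ • u`. -/
def rk (u : E2) : E2 →L[ℂ] E2 := (innerSL ℂ u).smulRight u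

lemma rk_apply (u x : E2) : rk u x = ⟪u, x⟫_ℂ • u := rfl

lemma inner_self_one {u : E2} (hu : ‖u‖ = 1) : ⟪u, u⟫_ℂ = 1 := by
  rw [inner_self_eq_norm_sq_to_K, hu]; norm_num

lemma rk_sa (u : E2) : IsSelfAdjoint (rk u) := by
  rw [ContinuousLinearMap.isSelfAdjoint_iff_isSymmetric]
  intro x y
  simp [rk_apply, inner_smul_left, inner_smul_right, mul_comm]

lemma rk_idem (u : E2) (hu : ‖u‖ = 1) : rk u ∘L rk u = rk u := by
  apply ContinuousLinearMap.ext; intro x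
  rw [ContinuousLinearMap.comp_apply, rk_apply, rk_apply, inner_smul_right,
    inner_self_one hu, mul_one]

lemma rk_range (v : E2) (hv : ‖v‖ = 1) :
    LinearMap.range ((rk v : E2 →L[ℂ] E2) : E2 →ₗ[ℂ] E2) = ℂ ∙ v := by
  apply le_antisymm
  · rintro _ ⟨x, rfl⟩
    exact Submodule.smul_mem _ _ (Submodule.mem_span_singleton_self v)
  · rw [Submodule.span_singleton_le_iff_mem]
    exact ⟨v, by rw [ContinuousLinearMap.coe_coe, rk_apply, inner_self_one hv, one_smul]⟩

lemma rk_isRankOne (v : E2) (hv : ‖v‖ = 1) : IsRankOneProjection (rk v) := by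
  refine ⟨rk_sa v, rk_idem v hv, ?_⟩
  rw [rk_range v hv]
  exact finrank_span_singleton (by intro h; rw [h] at hv; simp at hv)

lemma exists_unit (P : E2 →L[ℂ] E2) (hP : IsRankOneProjection P) :
    ∃ u : E2, ‖u‖ = 1 ∧ P = rk u := by
  obtain ⟨hsa, hidem, hrank⟩ := hP
  have hsym := (ContinuousLinearMap.isSelfAdjoint_iff_isSymmetric.mp hsa)
  have : Nontrivial (LinearMap.range ((P : E2 →L[ℂ] E2) : E2 →ₗ[ℂ] E2)) :=
    Module.nontrivial_of_finrank_pos (R := ℂ) (by omega)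
  obtain ⟨⟨w, hw⟩, hw0⟩ := exists_ne (0 : LinearMap.range ((P : E2 →L[ℂ] E2) : E2 →ₗ[ℂ] E2))
  have hwne : w ≠ 0 := by simpa [Submodule.mk_eq_zero] using hw0
  set u := (‖w‖⁻¹ : ℂ) • w with hudef
  have hu : ‖u‖ = 1 := by simp [hudef, norm_smul, hwne]
  have humem : u ∈ LinearMap.range ((P : E2 →L[ℂ] E2) : E2 →ₗ[ℂ] E2) :=
    Submodule.smul_mem _ _ hw
  have hune : u ≠ 0 := by intro h; rw [h] at hu; simp at hu
  have hPu : P u = u := by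
    obtain ⟨y, hy⟩ := humem
    rw [ContinuousLinearMap.coe_coe] at hy
    rw [← hy, ← ContinuousLinearMap.comp_apply, hidem]
  have hrange : LinearMap.range ((P : E2 →L[ℂ] E2) : E2 →ₗ[ℂ] E2) = ℂ ∙ u := by
    symm
    apply Submodule.eq_of_le_of_finrank_eq
    · rw [Submodule.span_singleton_le_iff_mem]; exact humem
    · rw [finrank_span_singleton hune, hrank]
  refine ⟨u, hu, ?_⟩
  apply ContinuousLinearMap.ext; intro x
  have hmem : P x ∈ ℂ ∙ u := by
    rw [← hrange]; exact ⟨x, rfl⟩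
  obtain ⟨a, ha⟩ := Submodule.mem_span_singleton.mp hmem
  have h1 : ⟪u, P x⟫_ℂ = a := by
    rw [← ha, inner_smul_right, inner_self_one hu, mul_one]
  have h2 : ⟪u, P x⟫_ℂ = ⟪u, x⟫_ℂ := by
    have h3 := hsym u x
    simp only [ContinuousLinearMap.coe_coe] at h3
    rw [hPu] at h3
    rw [← h3]
  rw [rk_apply, ← ha, ← h1, h2]

lemma exists_perp (u : E2) (hu : ‖u‖ = 1) :
    ∃ u' : E2, ‖u'‖ = 1 ∧ ⟪u, u'⟫_ℂ = 0 ∧ ∀ x : E2, x = ⟪u, x⟫_ℂ • u + ⟪u', x⟫_ℂ • u' := by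
  have hu0 : u ≠ 0 := by intro h; rw [h] at hu; simp at hu
  have hdim : Module.finrank ℂ (ℂ ∙ u)ᗮ = 1 := by
    have h1 := Submodule.finrank_add_finrank_orthogonal (𝕜 := ℂ) (ℂ ∙ u)
    rw [finrank_span_singleton hu0] at h1
    have h2 : Module.finrank ℂ E2 = 2 := by simp
    omega
  have : Nontrivial ((ℂ ∙ u)ᗮ) := by
    apply Module.nontrivial_of_finrank_pos (R := ℂ); omega
  obtain ⟨⟨w, hw⟩, hw0⟩ := exists_ne (0 : (ℂ ∙ u)ᗮ)
  have hwne : w ≠ 0 := by simpa [Submodule.mk_eq_zero] using hw0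
  have hinner : ⟪u, w⟫_ℂ = 0 := by
    have := hw _ (Submodule.mem_span_singleton_self u)
    simpa [inner_eq_zero_symm] using this
  set u' : E2 := (‖w‖⁻¹ : ℂ) • w with hu'def
  have hu' : ‖u'‖ = 1 := by simp [hu'def, norm_smul, hwne]
  have huu' : ⟪u, u'⟫_ℂ = 0 := by simp [hu'def, inner_smul_right, hinner]
  refine ⟨u', hu', huu', ?_⟩
  have hu'u : ⟪u', u⟫_ℂ = 0 := by rw [← inner_conj_symm, huu', map_zero]
  have hnorm : Orthonormal ℂ ![u, u'] := by
    rw [orthonormal_iff_ite]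
    intro i j
    fin_cases i <;> fin_cases j <;>
      norm_num [Matrix.cons_val_zero, Matrix.cons_val_one, Matrix.head_cons,
        inner_self_eq_norm_sq_to_K, hu, hu', huu', hu'u]
  have hspan : Submodule.span ℂ ({u, u'} : Set E2) = ⊤ := by
    apply Submodule.eq_top_of_finrank_eq
    have : ({u, u'} : Set E2) = Set.range ![u, u'] := by
      ext z; simp [Matrix.range_cons, Matrix.range_empty, or_comm]
    rw [this, finrank_span_eq_card hnorm.linearIndependent]
    simp
  intro x
  set y := x - ⟪u, x⟫_ℂ • u - ⟪u', x⟫_ℂ • u' with hy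
  have h1 : ⟪u, y⟫_ℂ = 0 := by
    simp [hy, inner_sub_right, inner_smul_right, inner_self_eq_norm_sq_to_K, hu, huu']
  have h2 : ⟪u', y⟫_ℂ = 0 := by
    simp [hy, inner_sub_right, inner_smul_right, inner_self_eq_norm_sq_to_K, hu', hu'u]
  have hy0 : y = 0 := by
    have hmem : y ∈ Submodule.span ℂ ({u, u'} : Set E2) := by rw [hspan]; trivial
    obtain ⟨c, d, hcd⟩ := Submodule.mem_span_pair.mp hmem
    have : ⟪y, y⟫_ℂ = 0 := by
      nth_rewrite 1 [← hcd]
      rw [inner_add_left, inner_smul_left, inner_smul_left, h1, h2]; ring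
    exact inner_self_eq_zero.mp this
  rw [hy] at hy0
  linear_combination (norm := module) hy0

lemma norm_of_sq_scalar {A : E2 →L[ℂ] E2} (hA : IsSelfAdjoint A) {c : ℝ} (hc : 0 ≤ c)
    (h : A ∘L A = (c : ℂ) • (1 : E2 →L[ℂ] E2)) : ‖A‖ = Real.sqrt c := by
  have h1 : ‖A‖ * ‖A‖ = ‖A ∘L A‖ := by
    rw [← CStarRing.norm_star_mul_self (x := A), hA.star_eq]; rfl
  rw [h] at h1
  have h2 : ‖(c : ℂ) • (1 : E2 →L[ℂ] E2)‖ = c := by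
    rw [norm_smul (c : ℂ) (1 : E2 →L[ℂ] E2), norm_one]
    simp [abs_of_nonneg hc]
  rw [h2] at h1
  rw [← Real.sqrt_mul_self (norm_nonneg A), h1]

lemma key_ring (P R : E2 →L[ℂ] E2) (hP : P * P = P) (hR : R * R = R) :
    (P + R - 1) * (P + R - 1) = 1 - (P - R) * (P - R) := by
  simp only [sub_mul, mul_sub, add_mul, mul_add, mul_one, one_mul, hP, hR]
  abel

lemma sq_scalar (u v u' : E2) (hu : ‖u‖ = 1) (hv : ‖v‖ = 1) (huu' : ⟪u, u'⟫_ℂ = 0)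
    (hexp : ∀ x : E2, x = ⟪u, x⟫_ℂ • u + ⟪u', x⟫_ℂ • u') :
    (rk u - rk v) ∘L (rk u - rk v)
      = ((1 - ‖⟪u, v⟫_ℂ‖ ^ 2 : ℝ) : ℂ) • (1 : E2 →L[ℂ] E2) := by
  set z := ⟪u, v⟫_ℂ with hz
  set w := ⟪u', v⟫_ℂ with hw
  set A := rk u - rk v with hA
  set c : ℂ := ((1 - ‖z‖ ^ 2 : ℝ) : ℂ) with hc
  have hvu : ⟪v, u⟫_ℂ = conj z := by rw [hz, inner_conj_symm]
  have hvu' : ⟪v, u'⟫_ℂ = conj w := by rw [hw, inner_conj_symm]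
  have hcz : c = 1 - conj z * z := by
    rw [hc, RCLike.conj_mul]; push_cast; rfl
  have hunit : conj z * z + conj w * w = 1 := by
    have h1 : ⟪v, v⟫_ℂ = 1 := inner_self_one hv
    nth_rewrite 2 [hexp v] at h1
    rw [inner_add_right, inner_smul_right, inner_smul_right, ← hz, ← hw, hvu, hvu'] at h1
    linear_combination h1
  have hAappu : A u = u - conj z • v := by
    rw [hA, ContinuousLinearMap.sub_apply, rk_apply, rk_apply, inner_self_one hu, hvu,
      one_smul]
  have hAappv : A v = z • u - v := by
    rw [hA, ContinuousLinearMap.sub_apply, rk_apply, rk_apply, inner_self_one hv, ← hz,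
      one_smul]
  have hAappu' : A u' = -(conj w • v) := by
    rw [hA, ContinuousLinearMap.sub_apply, rk_apply, rk_apply, huu', hvu', zero_smul,
      zero_sub]
  have hAu : A (A u) = c • u := by
    rw [hAappu, map_sub, map_smul, hAappu, hAappv, hcz]
    module
  have hAu' : A (A u') = c • u' := by
    have hcw : c = conj w * w := by rw [hcz]; linear_combination - hunit
    rw [hAappu', map_neg, map_smul, hAappv, hcw]
    nth_rewrite 1 [hexp v]
    rw [← hz, ← hw]
    module
  apply ContinuousLinearMap.ext; intro x
  rw [ContinuousLinearMap.comp_apply, ContinuousLinearMap.smul_apply,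
    ContinuousLinearMap.one_apply]
  nth_rewrite 1 [hexp x]
  rw [map_add, map_smul, map_smul, map_add, map_smul, map_smul, hAu, hAu']
  conv_rhs => rw [hexp x]
  module

lemma normA (u v u' : E2) (hu : ‖u‖ = 1) (hv : ‖v‖ = 1) (huu' : ⟪u, u'⟫_ℂ = 0)
    (hexp : ∀ x : E2, x = ⟪u, x⟫_ℂ • u + ⟪u', x⟫_ℂ • u') :
    ‖rk u - rk v‖ = Real.sqrt (1 - ‖⟪u, v⟫_ℂ‖ ^ 2) := by
  have hCS : ‖⟪u, v⟫_ℂ‖ ≤ 1 := by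
    have := norm_inner_le_norm (𝕜 := ℂ) u v
    rw [hu, hv] at this; simpa using this
  have hsaA : IsSelfAdjoint (rk u - rk v) :=
    IsSelfAdjoint.sub (R := E2 →L[ℂ] E2) (rk_sa u) (rk_sa v)
  exact norm_of_sq_scalar hsaA
    (by nlinarith [norm_nonneg ⟪u, v⟫_ℂ]) (sq_scalar u v u' hu hv huu' hexp)

lemma normB (u v u' : E2) (hu : ‖u‖ = 1) (hv : ‖v‖ = 1) (huu' : ⟪u, u'⟫_ℂ = 0)
    (hexp : ∀ x : E2, x = ⟪u, x⟫_ℂ • u + ⟪u', x⟫_ℂ • u') :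
    ‖rk u + rk v - 1‖ = ‖⟪u, v⟫_ℂ‖ := by
  have hBB : (rk u + rk v - 1) ∘L (rk u + rk v - 1)
      = ((‖⟪u, v⟫_ℂ‖ ^ 2 : ℝ) : ℂ) • (1 : E2 →L[ℂ] E2) := by
    have hmul : (rk u + rk v - 1) * (rk u + rk v - 1)
        = 1 - (rk u - rk v) * (rk u - rk v) :=
      key_ring _ _ (rk_idem u hu) (rk_idem v hv)
    have hmul' : (rk u + rk v - 1) ∘L (rk u + rk v - 1)
        = 1 - (rk u - rk v) ∘L (rk u - rk v) := hmul
    rw [hmul', sq_scalar u v u' hu hv huu' hexp]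
    push_cast
    module
  have hsa : IsSelfAdjoint (rk u + rk v - 1) :=
    IsSelfAdjoint.sub (R := E2 →L[ℂ] E2)
      (IsSelfAdjoint.add (R := E2 →L[ℂ] E2) (rk_sa u) (rk_sa v))
      (IsSelfAdjoint.one (E2 →L[ℂ] E2))
  rw [norm_of_sq_scalar hsa (sq_nonneg _) hBB, Real.sqrt_sq (norm_nonneg _)]

theorem dist_eq_inv_sqrt_two_tfae (P : E2 →L[ℂ] E2) (hP : IsRankOneProjection P)
    (s : ℝ) (hs : s ∈ Set.Icc (0 : ℝ) 1) :
    List.TFAE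
      [ s = 1 / Real.sqrt 2,
        ∃ R : E2 →L[ℂ] E2, IsRankOneProjection R ∧ ‖P - R‖ = s ∧
          ‖P - ((1 : E2 →L[ℂ] E2) - R)‖ = s,
        ∀ R : E2 →L[ℂ] E2, IsRankOneProjection R → ‖P - R‖ = s →
          ‖P - ((1 : E2 →L[ℂ] E2) - R)‖ = s ] := by
  obtain ⟨hs0, hs1⟩ := hs
  obtain ⟨u, hu, hPu⟩ := exists_unit P hP
  obtain ⟨u', hu', huu', hexp⟩ := exists_perp u hu
  have hsqrt2 : (1 / Real.sqrt 2) ^ 2 = 1 / 2 := by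
    rw [div_pow, one_pow, Real.sq_sqrt (by norm_num : (0:ℝ) ≤ 2)]
  have hhalf : Real.sqrt (1 / 2) = 1 / Real.sqrt 2 := by
    rw [one_div, one_div, Real.sqrt_inv]
  -- the two norm formulas for an arbitrary rank-one projection R = rk v
  have main : ∀ v : E2, ‖v‖ = 1 →
      ‖P - rk v‖ = Real.sqrt (1 - ‖⟪u, v⟫_ℂ‖ ^ 2) ∧
      ‖P - ((1 : E2 →L[ℂ] E2) - rk v)‖ = ‖⟪u, v⟫_ℂ‖ := by
    intro v hv
    constructor
    · rw [hPu]; exact normA u v u' hu hv huu' hexp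
    · have : P - ((1 : E2 →L[ℂ] E2) - rk v) = rk u + rk v - 1 := by rw [hPu]; abel
      rw [this]; exact normB u v u' hu hv huu' hexp
  have hCS : ∀ v : E2, ‖v‖ = 1 → ‖⟪u, v⟫_ℂ‖ ≤ 1 := by
    intro v hv
    have := norm_inner_le_norm (𝕜 := ℂ) u v
    rw [hu, hv] at this; simpa using this
  tfae_have 1 → 3 := by
    intro h1 R hR hnA
    obtain ⟨v, hv, rfl⟩ := exists_unit R hR
    obtain ⟨hA, hB⟩ := main v hv
    rw [hB]
    set t := ‖⟪u, v⟫_ℂ‖ with ht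
    have ht0 : 0 ≤ t := norm_nonneg _
    have ht1 : t ≤ 1 := hCS v hv
    have hAs : Real.sqrt (1 - t ^ 2) = s := by rw [← hA, ← hnA]
    have h2 : 1 - t ^ 2 = s ^ 2 := by
      rw [← hAs, Real.sq_sqrt (by nlinarith)]
    rw [h1] at h2
    rw [hsqrt2] at h2
    have ht2 : t ^ 2 = 1 / 2 := by linarith
    rw [h1, ← hhalf, ← ht2, Real.sqrt_sq ht0]
  tfae_have 3 → 2 := by
    intro h3
    set v : E2 := ((Real.sqrt (1 - s ^ 2) : ℝ) : ℂ) • u + (s : ℂ) • u' with hvdef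
    have hz : ⟪u, v⟫_ℂ = ((Real.sqrt (1 - s ^ 2) : ℝ) : ℂ) := by
      rw [hvdef, inner_add_right, inner_smul_right, inner_smul_right, inner_self_one hu,
        huu', mul_one, mul_zero, add_zero]
    have hs2 : 0 ≤ 1 - s ^ 2 := by nlinarith
    have hv : ‖v‖ = 1 := by
      have hperp : ⟪((Real.sqrt (1 - s ^ 2) : ℝ) : ℂ) • u, (s : ℂ) • u'⟫_ℂ = 0 := by
        rw [inner_smul_right, inner_smul_left, huu']; ring
      have := norm_add_sq_eq_norm_sq_add_norm_sq_of_inner_eq_zero _ _ hperp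
      rw [← hvdef] at this
      rw [norm_smul, norm_smul, hu, hu'] at this
      simp only [mul_one, Complex.norm_real] at this
      rw [Real.norm_eq_abs, Real.norm_eq_abs, abs_of_nonneg (Real.sqrt_nonneg _),
        abs_of_nonneg hs0, Real.mul_self_sqrt hs2] at this
      nlinarith [norm_nonneg v]
    have hnA : ‖P - rk v‖ = s := by
      rw [(main v hv).1, hz]
      have : ‖((Real.sqrt (1 - s ^ 2) : ℝ) : ℂ)‖ = Real.sqrt (1 - s ^ 2) := by
        rw [Complex.norm_real, Real.norm_eq_abs, abs_of_nonneg (Real.sqrt_nonneg _)]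
      rw [this, Real.sq_sqrt hs2]
      have : (1 : ℝ) - (1 - s ^ 2) = s ^ 2 := by ring
      rw [this, Real.sqrt_sq hs0]
    exact ⟨rk v, rk_isRankOne v hv, hnA, h3 (rk v) (rk_isRankOne v hv) hnA⟩
  tfae_have 2 → 1 := by
    rintro ⟨R, hR, hnA, hnB⟩
    obtain ⟨v, hv, rfl⟩ := exists_unit R hR
    obtain ⟨hA, hB⟩ := main v hv
    set t := ‖⟪u, v⟫_ℂ‖ with ht
    have ht0 : 0 ≤ t := norm_nonneg _
    have ht1 : t ≤ 1 := hCS v hv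
    have hts : t = s := by rw [← hB, ← hnB]
    have hsA : Real.sqrt (1 - t ^ 2) = s := hA.symm.trans hnA
    have h2 : 1 - t ^ 2 = s ^ 2 := by
      rw [← hsA, Real.sq_sqrt (by nlinarith : (0:ℝ) ≤ 1 - t ^ 2)]
    have hs2 : s ^ 2 = 1 / 2 := by rw [hts] at h2; linarith
    rw [← Real.sqrt_sq hs0, hs2, hhalf]
  tfae_finish
end
end

section
/- Let P, Q be distinct non-orthocomplementary rank-one projections on ℂ² (i.e., Q ≠ P and Q ≠ I - P) and let s, t ∈ (0,1). Then the operator I - tP - sQ is positive semidefinite if and only if s ≤ (1-t)/(1 - t·‖P - Q‖²). -/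
noncomputable section

/-!
Write `P = |p⟩⟨p|` and `Q = |q⟩⟨q|` with unit vectors `p`, `q`. Positivity of `1 - t P - s Q`
says `t |⟪p, x⟫|² + s |⟪q, x⟫|² ≤ ‖x‖²` for all `x`, and `‖P - Q‖² = 1 - |⟪p, q⟫|²`. Splitting
`x` along `p` and its orthogonal complement bounds `|⟪q, x⟫|` by a real linear form in the two
components, so sufficiency reduces to a real 2 × 2 quadratic form with nonnegative determinant
`1 - t - s + s t ‖P - Q‖²`; necessity follows by testing at `x = (1 - s) p + s ⟪q, p⟫ q`.
-/

open scoped InnerProductSpace ComplexConjugate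
open InnerProductSpace

section

variable {H : Type*} [NormedAddCommGroup H] [InnerProductSpace ℂ H]

theorem IsRankOneProjection.exists_eq_rankOne [CompleteSpace H] {P : H →L[ℂ] H}
    (hP : IsRankOneProjection P) : ∃ p : H, ‖p‖ = 1 ∧ P = rankOne ℂ p p := by
  obtain ⟨hsa, hidem, hrank⟩ := hP
  obtain ⟨_, hPrange⟩ := isStarProjection_iff_eq_starProjection_range.mp ⟨hidem, hsa⟩
  obtain ⟨w, hw, hw0⟩ := (Submodule.ne_bot_iff (LinearMap.range (P : H →ₗ[ℂ] H))).mp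
    fun h ↦ by rw [h, finrank_bot] at hrank; exact zero_ne_one hrank
  obtain ⟨p, hpP, hp⟩ : ∃ p ∈ LinearMap.range (P : H →ₗ[ℂ] H), ‖p‖ = 1 :=
    ⟨_, Submodule.smul_mem _ _ hw, norm_smul_inv_norm hw0⟩
  have hspan : P.range = ℂ ∙ p :=
    eq_span_singleton_of_mem_of_finrank_eq_one hrank hpP (norm_ne_zero_iff.mp (hp ▸ one_ne_zero))
  refine ⟨p, hp, ?_⟩
  ext x
  conv_lhs => rw [hPrange]
  rw [rankOne_apply, ← Submodule.starProjection_unit_singleton ℂ hp]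
  congr 2

theorem inner_sub_inner_smul_self_eq_zero {p : H} (hp : ‖p‖ = 1) (x : H) :
    ⟪p, x - ⟪p, x⟫_ℂ • p⟫_ℂ = 0 := by
  rw [inner_sub_right, inner_smul_right, inner_self_eq_norm_sq_to_K, hp]
  simp

theorem norm_sq_eq_norm_inner_sq_add_norm_sub_sq {p : H} (hp : ‖p‖ = 1) (x : H) :
    ‖x‖ ^ 2 = ‖⟪p, x⟫_ℂ‖ ^ 2 + ‖x - ⟪p, x⟫_ℂ • p‖ ^ 2 := by
  have h := norm_add_sq_eq_norm_sq_add_norm_sq_of_inner_eq_zero (⟪p, x⟫_ℂ • p)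
    (x - ⟪p, x⟫_ℂ • p) (by rw [inner_smul_left, inner_sub_inner_smul_self_eq_zero hp, mul_zero])
  rw [add_sub_cancel, norm_smul, hp, mul_one] at h
  simpa only [sq] using h

theorem norm_inner_le_of_norm_eq_one {p : H} (hp : ‖p‖ = 1) (q x : H) :
    ‖⟪q, x⟫_ℂ‖ ≤ ‖⟪p, q⟫_ℂ‖ * ‖⟪p, x⟫_ℂ‖ + ‖q - ⟪p, q⟫_ℂ • p‖ * ‖x - ⟪p, x⟫_ℂ • p‖ := by
  have h : ⟪q, x⟫_ℂ = conj ⟪p, q⟫_ℂ * ⟪p, x⟫_ℂ + ⟪q - ⟪p, q⟫_ℂ • p, x - ⟪p, x⟫_ℂ • p⟫_ℂ := by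
    rw [inner_sub_left q, inner_smul_left, inner_sub_inner_smul_self_eq_zero hp, mul_zero,
      sub_zero, inner_sub_right, inner_smul_right, inner_conj_symm]
    ring
  calc ‖⟪q, x⟫_ℂ‖ ≤ ‖conj ⟪p, q⟫_ℂ * ⟪p, x⟫_ℂ‖ + ‖⟪q - ⟪p, q⟫_ℂ • p, x - ⟪p, x⟫_ℂ • p⟫_ℂ‖ :=
        h ▸ norm_add_le _ _
    _ ≤ _ := by
      rw [norm_mul, RCLike.norm_conj]
      gcongr
      exact norm_inner_le_norm _ _

theorem norm_sub_inner_smul_sq {p q : H} (hp : ‖p‖ = 1) (hq : ‖q‖ = 1) :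
    ‖q - ⟪p, q⟫_ℂ • p‖ ^ 2 = 1 - ‖⟪p, q⟫_ℂ‖ ^ 2 := by
  have h := norm_sq_eq_norm_inner_sq_add_norm_sub_sq hp q
  rw [hq] at h
  linarith

theorem re_inner_rankOne_self_apply (p x : H) :
    (⟪rankOne ℂ p p x, x⟫_ℂ).re = ‖⟪p, x⟫_ℂ‖ ^ 2 := by
  rw [rankOne_apply, inner_smul_left, Complex.conj_mul', ← Complex.ofReal_pow, Complex.ofReal_re]

theorem isPositive_one_sub_smul_rankOne_sub_smul_rankOne_iff (t s : ℝ) (p q : H) :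
    ((1 : H →L[ℂ] H) - (t : ℂ) • rankOne ℂ p p - (s : ℂ) • rankOne ℂ q q).IsPositive ↔
      ∀ x, t * ‖⟪p, x⟫_ℂ‖ ^ 2 + s * ‖⟪q, x⟫_ℂ‖ ^ 2 ≤ ‖x‖ ^ 2 := by
  have hsymm : ((1 : H →L[ℂ] H) - (t : ℂ) • rankOne ℂ p p - (s : ℂ) • rankOne ℂ q q :
      H →L[ℂ] H).IsSymmetric :=
    (LinearMap.IsSymmetric.id.sub ((isSymmetric_rankOne_self p).smul (Complex.conj_ofReal t))).sub
      ((isSymmetric_rankOne_self q).smul (Complex.conj_ofReal s))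
  simp only [ContinuousLinearMap.isPositive_def, hsymm, true_and,
    ContinuousLinearMap.reApplyInnerSelf_apply, sub_apply, smul_apply, one_apply_eq_self,
    inner_sub_left, inner_smul_left, map_sub, Complex.conj_ofReal, inner_self_eq_norm_sq,
    RCLike.re_to_complex, Complex.re_ofReal_mul, re_inner_rankOne_self_apply]
  simp only [sub_sub, sub_nonneg]

theorem norm_rankOne_sub_rankOne_apply_le {p q : H} (hp : ‖p‖ = 1) (hq : ‖q‖ = 1) (x : H) :
    ‖(rankOne ℂ p p - rankOne ℂ q q) x‖ ≤ ‖q - ⟪p, q⟫_ℂ • p‖ * ‖x‖ := by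
  set c := ‖q - ⟪p, q⟫_ℂ • p‖
  set y := x - ⟪q, x⟫_ℂ • q
  have hc : ‖p - ⟪q, p⟫_ℂ • q‖ = c := by
    rw [← sq_eq_sq₀ (norm_nonneg _) (norm_nonneg _), norm_sub_inner_smul_sq hq hp,
      norm_sub_inner_smul_sq hp hq, norm_inner_symm]
  have hqy : ⟪q, y⟫_ℂ = 0 := inner_sub_inner_smul_self_eq_zero hq x
  have hy : ‖⟪p, y⟫_ℂ‖ ≤ c * ‖y‖ := by
    simpa [hqy, hc] using norm_inner_le_of_norm_eq_one hq p y
  have happly :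
      (rankOne ℂ p p - rankOne ℂ q q) x = ⟪p, y⟫_ℂ • p + ⟪q, x⟫_ℂ • (⟪p, q⟫_ℂ • p - q) := by
    simp only [y, sub_apply, rankOne_apply, inner_sub_right, inner_smul_right]
    module
  have horth : ⟪⟪p, y⟫_ℂ • p, ⟪q, x⟫_ℂ • (⟪p, q⟫_ℂ • p - q)⟫_ℂ = 0 := by
    rw [inner_smul_left, inner_smul_right, ← neg_sub, inner_neg_right,
      inner_sub_inner_smul_self_eq_zero hp, neg_zero, mul_zero, mul_zero]
  refine pow_le_pow_iff_left₀ (norm_nonneg _) (by positivity) two_ne_zero |>.mp ?_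
  calc ‖(rankOne ℂ p p - rankOne ℂ q q) x‖ ^ 2
      = ‖⟪p, y⟫_ℂ‖ ^ 2 + ‖⟪q, x⟫_ℂ‖ ^ 2 * c ^ 2 := by
        rw [happly, sq, norm_add_sq_eq_norm_sq_add_norm_sq_of_inner_eq_zero _ _ horth, norm_smul,
          norm_smul, hp, norm_sub_rev]
        ring
    _ ≤ (c * ‖y‖) ^ 2 + ‖⟪q, x⟫_ℂ‖ ^ 2 * c ^ 2 := by gcongr
    _ = (c * ‖x‖) ^ 2 := by
        rw [mul_pow c ‖x‖, norm_sq_eq_norm_inner_sq_add_norm_sub_sq hq x]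
        ring

theorem norm_rankOne_sub_rankOne_sq {p q : H} (hp : ‖p‖ = 1) (hq : ‖q‖ = 1) :
    ‖rankOne ℂ p p - rankOne ℂ q q‖ ^ 2 = 1 - ‖⟪p, q⟫_ℂ‖ ^ 2 := by
  rw [← norm_sub_inner_smul_sq hp hq]
  congr 1
  refine le_antisymm ((rankOne ℂ p p - rankOne ℂ q q).opNorm_le_bound (norm_nonneg _)
    (norm_rankOne_sub_rankOne_apply_le hp hq)) ?_
  calc ‖q - ⟪p, q⟫_ℂ • p‖ = ‖(rankOne ℂ p p - rankOne ℂ q q) q‖ := by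
        rw [sub_apply, rankOne_apply, rankOne_apply, inner_self_eq_norm_sq_to_K, hq, norm_sub_rev]
        simp
    _ ≤ ‖rankOne ℂ p p - rankOne ℂ q q‖ := by
        simpa [hq] using (rankOne ℂ p p - rankOne ℂ q q).le_opNorm q

theorem norm_inner_sq_le_one {p q : H} (hp : ‖p‖ = 1) (hq : ‖q‖ = 1) : ‖⟪p, q⟫_ℂ‖ ^ 2 ≤ 1 :=
  pow_le_one₀ (norm_nonneg _) (by simpa [hp, hq] using norm_inner_le_norm (𝕜 := ℂ) p q)

theorem mul_sq_add_mul_sq_le_sq_add_sq {s t b c X Y W : ℝ} (hs : 0 ≤ s) (hsc : s * c ^ 2 < 1)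
    (hbc : b ^ 2 + c ^ 2 = 1) (hdet : 0 ≤ 1 - t - s + s * t * c ^ 2) (hW0 : 0 ≤ W)
    (hW : W ≤ b * X + c * Y) :
    t * X ^ 2 + s * W ^ 2 ≤ X ^ 2 + Y ^ 2 := by
  have key : (1 - s * c ^ 2) * (X ^ 2 + Y ^ 2 - t * X ^ 2 - s * (b * X + c * Y) ^ 2)
      = (1 - t - s + s * t * c ^ 2) * X ^ 2 + ((1 - s * c ^ 2) * Y - s * b * c * X) ^ 2 := by
    linear_combination (-s * X ^ 2) * hbc
  have hform : 0 ≤ X ^ 2 + Y ^ 2 - t * X ^ 2 - s * (b * X + c * Y) ^ 2 :=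
    (mul_nonneg_iff_of_pos_left (show 0 < 1 - s * c ^ 2 by linarith)).mp (by rw [key]; positivity)
  nlinarith [mul_le_mul_of_nonneg_left (pow_le_pow_left₀ hW0 hW 2) hs]

-- `1 - t - s + s t (1 - ‖⟪p, q⟫‖²)` is the determinant of `1 - t P - s Q` on `span {p, q}`.
theorem forall_le_norm_sq_of_det_nonneg {p q : H} (hp : ‖p‖ = 1) (hq : ‖q‖ = 1) {s t : ℝ}
    (hs0 : 0 ≤ s) (hs1 : s < 1) (hdet : 0 ≤ 1 - t - s + s * t * (1 - ‖⟪p, q⟫_ℂ‖ ^ 2)) (x : H) :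
    t * ‖⟪p, x⟫_ℂ‖ ^ 2 + s * ‖⟪q, x⟫_ℂ‖ ^ 2 ≤ ‖x‖ ^ 2 := by
  have hc := norm_sub_inner_smul_sq hp hq
  have ha := norm_inner_sq_le_one hp hq
  rw [norm_sq_eq_norm_inner_sq_add_norm_sub_sq hp x]
  refine mul_sq_add_mul_sq_le_sq_add_sq hs0 ?_ (by linarith) (hc ▸ hdet) (norm_nonneg _)
    (norm_inner_le_of_norm_eq_one hp q x)
  rw [hc]
  nlinarith [sq_nonneg ‖⟪p, q⟫_ℂ‖]

theorem det_nonneg_of_forall_le_norm_sq {p q : H} (hp : ‖p‖ = 1) (hq : ‖q‖ = 1) {s t : ℝ}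
    (hs1 : s < 1) (h : ∀ x, t * ‖⟪p, x⟫_ℂ‖ ^ 2 + s * ‖⟪q, x⟫_ℂ‖ ^ 2 ≤ ‖x‖ ^ 2) :
    0 ≤ 1 - t - s + s * t * (1 - ‖⟪p, q⟫_ℂ‖ ^ 2) := by
  have ha := norm_inner_sq_le_one hp hq
  set γ := ⟪p, q⟫_ℂ
  -- `x₀` is the adjugate of `1 - t P - s Q` on `span {p, q}` applied to `p`, so the quadratic
  -- form at `x₀` is `⟪p, x₀⟫` times the determinant.
  set x₀ : H := ((1 - s : ℝ) : ℂ) • p + ((s : ℂ) * conj γ) • q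
  have hpx : ⟪p, x₀⟫_ℂ = ((1 - s * (1 - ‖γ‖ ^ 2) : ℝ) : ℂ) := by
    simp only [x₀, inner_add_right, inner_smul_right, inner_self_eq_norm_sq_to_K, hp]
    rw [mul_assoc, Complex.conj_mul']
    push_cast
    ring
  have hqx : ⟪q, x₀⟫_ℂ = conj γ := by
    simp only [x₀, inner_add_right, inner_smul_right, inner_self_eq_norm_sq_to_K, hq,
      ← inner_conj_symm q p]
    push_cast
    ring
  have hperp : x₀ - ⟪p, x₀⟫_ℂ • p = ((s : ℂ) * conj γ) • (q - γ • p) := by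
    rw [hpx, smul_sub, smul_smul, mul_assoc, Complex.conj_mul']
    simp only [x₀]
    push_cast
    module
  have hx₀ : ‖x₀‖ ^ 2 = (1 - s * (1 - ‖γ‖ ^ 2)) ^ 2 + s ^ 2 * ‖γ‖ ^ 2 * (1 - ‖γ‖ ^ 2) := by
    rw [norm_sq_eq_norm_inner_sq_add_norm_sub_sq hp x₀, hperp, hpx, norm_smul, mul_pow,
      norm_sub_inner_smul_sq hp hq, Complex.norm_real, Real.norm_eq_abs, sq_abs, norm_mul,
      Complex.norm_conj, Complex.norm_real, Real.norm_eq_abs, mul_pow, sq_abs]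
  have hx := h x₀
  rw [hpx, hqx, hx₀, Complex.norm_conj, Complex.norm_real, Real.norm_eq_abs, sq_abs] at hx
  have key : (1 - s * (1 - ‖γ‖ ^ 2)) * (1 - t - s + s * t * (1 - ‖γ‖ ^ 2))
      = (1 - s * (1 - ‖γ‖ ^ 2)) ^ 2 + s ^ 2 * ‖γ‖ ^ 2 * (1 - ‖γ‖ ^ 2)
        - (t * (1 - s * (1 - ‖γ‖ ^ 2)) ^ 2 + s * ‖γ‖ ^ 2) := by
    ring
  exact (mul_nonneg_iff_of_pos_left (show 0 < 1 - s * (1 - ‖γ‖ ^ 2) by nlinarith)).mp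
    (by rw [key]; linarith)

theorem isPositive_one_sub_smul_rankOne_sub_smul_rankOne_iff_det_nonneg {p q : H} (hp : ‖p‖ = 1)
    (hq : ‖q‖ = 1) {s t : ℝ} (hs0 : 0 ≤ s) (hs1 : s < 1) :
    ((1 : H →L[ℂ] H) - (t : ℂ) • rankOne ℂ p p - (s : ℂ) • rankOne ℂ q q).IsPositive ↔
      0 ≤ 1 - t - s + s * t * ‖rankOne ℂ p p - rankOne ℂ q q‖ ^ 2 := by
  rw [isPositive_one_sub_smul_rankOne_sub_smul_rankOne_iff, norm_rankOne_sub_rankOne_sq hp hq]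
  exact ⟨det_nonneg_of_forall_le_norm_sq hp hq hs1,
    forall_le_norm_sq_of_det_nonneg hp hq hs0 hs1⟩

end

theorem coexistence_criterion_rank_one_general (P Q : E2 →L[ℂ] E2)
    (hP : IsRankOneProjection P) (hQ : IsRankOneProjection Q)
    (s t : ℝ) (hs : s ∈ Set.Ioo (0 : ℝ) 1) (ht : t ∈ Set.Ioo (0 : ℝ) 1) :
    ((1 : E2 →L[ℂ] E2) - (t : ℂ) • P - (s : ℂ) • Q).IsPositive ↔
      s ≤ (1 - t) / (1 - t * ‖P - Q‖ ^ 2) := by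
  obtain ⟨p, hp, rfl⟩ := hP.exists_eq_rankOne
  obtain ⟨q, hq, rfl⟩ := hQ.exists_eq_rankOne
  have hPQ : ‖rankOne ℂ p p - rankOne ℂ q q‖ ^ 2 ≤ 1 := by
    rw [norm_rankOne_sub_rankOne_sq hp hq]
    linarith [sq_nonneg ‖⟪p, q⟫_ℂ‖]
  rw [isPositive_one_sub_smul_rankOne_sub_smul_rankOne_iff_det_nonneg hp hq hs.1.le hs.2,
    le_div_iff₀ (by nlinarith [ht.1, ht.2])]
  constructor <;> intro h <;> linarith

theorem coexistence_criterion_rank_one (P Q : E2 →L[ℂ] E2)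
    (hP : IsRankOneProjection P) (hQ : IsRankOneProjection Q)
    (hQP : Q ≠ P) (hQP' : Q ≠ (1 : E2 →L[ℂ] E2) - P)
    (s t : ℝ) (hs : s ∈ Set.Ioo (0 : ℝ) 1) (ht : t ∈ Set.Ioo (0 : ℝ) 1) :
    ((1 : E2 →L[ℂ] E2) - (t : ℂ) • P - (s : ℂ) • Q).IsPositive ↔
      s ≤ (1 - t) / (1 - t * ‖P - Q‖ ^ 2) :=
  coexistence_criterion_rank_one_general P Q hP hQ s t hs ht
end
end

section
/- Two effects A, B on a Hilbert space H are coexistent (i.e., there exist effects E, F, G with A = E + G, B = F + G, and E + F + G an effect) if and only if there exist effects M, N with M ≤ A, N ≤ I - A, and M + N = B. -/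
noncomputable section

theorem coexistent_iff_mania {H : Type*} [NormedAddCommGroup H] [InnerProductSpace ℂ H]
    [CompleteSpace H] (A B : H →L[ℂ] H) (hA : IsEffect A) (hB : IsEffect B) :
    (∃ E F G : H →L[ℂ] H, IsEffect E ∧ IsEffect F ∧ IsEffect G ∧
      A = E + G ∧ B = F + G ∧ IsEffect (E + F + G)) ↔ Coexistent A B := by
  constructor
  · rintro ⟨E, F, G, hE, hF, hG, hAEG, hBFG, hEFG⟩
    refine ⟨G, F, hG, hF, ?_, ?_, ?_⟩
    · have : A - G = E := by rw [hAEG]; abel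
      rw [this]; exact hE.1
    · have : ((1 : H →L[ℂ] H) - A) - F = (1 : H →L[ℂ] H) - (E + F + G) := by
        rw [hAEG]; abel
      rw [this]; exact hEFG.2
    · rw [hBFG]; abel
  · rintro ⟨M, N, hM, hN, hAM, hIAN, hMN⟩
    refine ⟨A - M, N, M, ⟨hAM, ?_⟩, hN, hM, by abel, by rw [← hMN]; abel, ?_, ?_⟩
    · have : (1 : H →L[ℂ] H) - (A - M) = ((1 : H →L[ℂ] H) - A) + M := by abel
      rw [this]; exact hA.2.add hM.1
    · have : A - M + N + M = A + N := by abel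
      rw [this]; exact hA.1.add hN.1
    · have : (1 : H →L[ℂ] H) - (A - M + N + M) = ((1 : H →L[ℂ] H) - A) - N := by abel
      rw [this]; exact hIAN
end
end

section
/- If A is an effect and C is an effect commuting with A (AC = CA), then A and C are coexistent. -/
open Polynomial in
lemma commute_aeval {A : Type*} [CommSemiring R] [Semiring A] [Algebra R A] {a b : A}
    (h : Commute a b) (q : R[X]) : Commute (Polynomial.aeval a q) b := by
  induction q using Polynomial.induction_on' with
  | add p q hp hq => simpa [map_add] using hp.add_left hq
  | monomial n c =>
    rw [Polynomial.aeval_monomial]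
    exact (Algebra.commute_algebraMap_left c b).mul_left (h.pow_left n)

lemma commute_cfcHom {A : Type*} [CStarAlgebra A] {a b : A} (ha : IsSelfAdjoint a)
    (h : Commute a b) (f : C(spectrum ℝ a, ℝ)) : Commute (cfcHom ha f) b := by
  have hclosed : IsClosed {g : C(spectrum ℝ a, ℝ) | Commute (cfcHom ha g) b} := by
    have hc : Continuous fun g : C(spectrum ℝ a, ℝ) => cfcHom ha g * b - b * cfcHom ha g := by
      have := (cfcHom_isClosedEmbedding (R := ℝ) ha).continuous
      fun_prop
    have : {g : C(spectrum ℝ a, ℝ) | Commute (cfcHom ha g) b} =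
        (fun g : C(spectrum ℝ a, ℝ) => cfcHom ha g * b - b * cfcHom ha g) ⁻¹' {0} := by
      ext g; simp [Commute, SemiconjBy, sub_eq_zero]
    rw [this]
    exact isClosed_singleton.preimage hc
  have hpoly : (polynomialFunctions (spectrum ℝ a) : Set C(spectrum ℝ a, ℝ)) ⊆
      {g | Commute (cfcHom ha g) b} := by
    intro g hg
    rw [polynomialFunctions_coe] at hg
    obtain ⟨q, rfl⟩ := hg
    have : cfcHom ha (Polynomial.toContinuousMapOnAlgHom (spectrum ℝ a) q) =
        Polynomial.aeval a q := by
      rw [← cfc_polynomial q a ha, cfc_apply (R := ℝ) (Polynomial.eval · q) a ha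
        (by fun_prop)]
      congr
    rw [Set.mem_setOf_eq, this]
    exact commute_aeval h q
  have htop : f ∈ (polynomialFunctions (spectrum ℝ a)).topologicalClosure := by
    rw [polynomialFunctions.topologicalClosure]; trivial
  exact closure_minimal hpoly hclosed htop

lemma commute_cfc {A : Type*} [CStarAlgebra A] {a b : A}
    (h : Commute a b) (f : ℝ → ℝ) : Commute (cfc f a) b := by
  refine cfc_cases (fun x => Commute x b) a f (Commute.zero_left b) fun hf ha => ?_
  exact commute_cfcHom ha h _

lemma mul_nonneg_of_commute {A : Type*} [CStarAlgebra A] [PartialOrder A] [StarOrderedRing A]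
    {a b : A} (ha : 0 ≤ a) (hb : 0 ≤ b) (h : Commute a b) : 0 ≤ a * b := by
  set s := cfc Real.sqrt a with hs
  have hsa : IsSelfAdjoint s := cfc_predicate Real.sqrt a
  have hss : s * s = a := by
    rw [hs, ← cfc_mul Real.sqrt Real.sqrt a]
    have : cfc (fun x => Real.sqrt x * Real.sqrt x) a = cfc id a :=
      cfc_congr fun x hx => Real.mul_self_sqrt (spectrum_nonneg_of_nonneg ha hx)
    rw [this]
    exact cfc_id ℝ a
  have hcs : Commute s b := commute_cfc h Real.sqrt
  calc (0:A) ≤ star s * b * s := star_left_conjugate_nonneg hb s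
  _ = a * b := by rw [hsa.star_eq, mul_assoc, ← hcs.eq, ← mul_assoc, hss]


noncomputable section

theorem coexistent_of_commute {H : Type*} [NormedAddCommGroup H] [InnerProductSpace ℂ H]
    [CompleteSpace H] (A C : H →L[ℂ] H) (hA : IsEffect A) (hC : IsEffect C)
    (hcomm : A ∘L C = C ∘L A) :
    Coexistent A C := by
  obtain ⟨hA0, hA1⟩ := hA
  obtain ⟨hC0, hC1⟩ := hC
  rw [← ContinuousLinearMap.nonneg_iff_isPositive] at hA0 hC0
  have hA1' : (0 : H →L[ℂ] H) ≤ 1 - A := (ContinuousLinearMap.nonneg_iff_isPositive _).mpr hA1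
  have hC1' : (0 : H →L[ℂ] H) ≤ 1 - C := (ContinuousLinearMap.nonneg_iff_isPositive _).mpr hC1
  have hAC : Commute A C := hcomm
  have p1 : (0 : H →L[ℂ] H) ≤ A * C := mul_nonneg_of_commute hA0 hC0 hAC
  have p2 : (0 : H →L[ℂ] H) ≤ A * (1 - C) :=
    mul_nonneg_of_commute hA0 hC1' ((Commute.one_right A).sub_right hAC)
  have p3 : (0 : H →L[ℂ] H) ≤ (1 - A) * C :=
    mul_nonneg_of_commute hA1' hC0 ((Commute.one_left C).sub_left hAC)
  have p4 : (0 : H →L[ℂ] H) ≤ (1 - A) * (1 - C) :=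
    mul_nonneg_of_commute hA1' hC1'
      ((Commute.one_right (1 - A : H →L[ℂ] H)).sub_right ((Commute.one_left C).sub_left hAC))
  have e2 : A - A * C = A * (1 - C) := by noncomm_ring
  have e3 : (1 : H →L[ℂ] H) - A - (1 - A) * C = (1 - A) * (1 - C) := by noncomm_ring
  have e1 : (1 : H →L[ℂ] H) - A * C = A * (1 - C) + ((1 : H →L[ℂ] H) - A) := by noncomm_ring
  have e4 : (1 : H →L[ℂ] H) - (1 - A) * C = (1 - A) * (1 - C) + A := by noncomm_ring
  refine ⟨A * C, (1 - A) * C, ⟨?_, ?_⟩, ⟨?_, ?_⟩, ?_, ?_, ?_⟩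
  · exact (ContinuousLinearMap.nonneg_iff_isPositive _).mp p1
  · rw [← ContinuousLinearMap.nonneg_iff_isPositive, e1]
    exact add_nonneg p2 hA1'
  · exact (ContinuousLinearMap.nonneg_iff_isPositive _).mp p3
  · rw [← ContinuousLinearMap.nonneg_iff_isPositive, e4]
    exact add_nonneg p4 hA0
  · rw [← ContinuousLinearMap.nonneg_iff_isPositive, e2]; exact p2
  · rw [← ContinuousLinearMap.nonneg_iff_isPositive, e3]; exact p4
  · noncomm_ring
end
end

section
/- If P is an orthogonal projection and A is an effect coexistent with P, then A commutes with P: AP = PA. -/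
noncomputable section

/-! If `0 ≤ a ≤ e` for a projection `e`, then `a e = e a = a`; applied to `1 - e`, an element
`0 ≤ b ≤ 1 - e` satisfies `b e = e b = 0`. So the summands `M ≤ P` and `N ≤ 1 - P` of `A = M + N`
both commute with `P`. -/

lemma IsStarProjection.commute_add_of_le_of_le_one_sub {A : Type*} [CStarAlgebra A]
    [PartialOrder A] [StarOrderedRing A] {e a b : A} (he : IsStarProjection e)
    (ha : 0 ≤ a) (hae : a ≤ e) (hb : 0 ≤ b) (hbe : b ≤ 1 - e) : Commute e (a + b) := by
  obtain ⟨hae_right, hae_left⟩ := he.mul_right_and_mul_left_of_nonneg_of_le ha hae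
  obtain ⟨hbe_right, hbe_left⟩ := he.one_sub.mul_right_and_mul_left_of_nonneg_of_le hb hbe
  have hbe_zero : b * e = 0 := by simpa [mul_sub] using hbe_right
  have heb_zero : e * b = 0 := by simpa [sub_mul] using hbe_left
  simp only [Commute, SemiconjBy, mul_add, add_mul, hae_right, hae_left, hbe_zero, heb_zero]

theorem commute_of_coexistent_with_projection_general {H : Type*} [NormedAddCommGroup H]
    [InnerProductSpace ℂ H] [CompleteSpace H] (P A : H →L[ℂ] H)
    (hP₁ : IsSelfAdjoint P) (hP₂ : P ∘L P = P)
    (h : Coexistent P A) :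
    A ∘L P = P ∘L A := by
  obtain ⟨M, N, hM, hN, hMP, hNP, rfl⟩ := h
  have hP : IsStarProjection P := ⟨hP₂, hP₁⟩
  exact (hP.commute_add_of_le_of_le_one_sub ((M.nonneg_iff_isPositive).mpr hM.1) hMP
    ((N.nonneg_iff_isPositive).mpr hN.1) hNP).eq.symm

theorem commute_of_coexistent_with_projection {H : Type*} [NormedAddCommGroup H]
    [InnerProductSpace ℂ H] [CompleteSpace H] (P A : H →L[ℂ] H)
    (hP₁ : IsSelfAdjoint P) (hP₂ : P ∘L P = P) (hA : IsEffect A)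
    (h : Coexistent P A) :
    A ∘L P = P ∘L A :=
  commute_of_coexistent_with_projection_general P A hP₁ hP₂ h
end
end

section
/- Let A be an effect on ℂ² with eigenvalues λ₁ and λ₂ in [0,1], and P the rank-one projection onto the λ₁-eigenspace (assume λ₁ ≠ λ₂). Then for a unit vector of the form x = cos(α)·x₁ + sin(α)·x₂ with x₁ a unit vector in range(P) and x₂ a unit vector orthogonal to x₁, and 0 < α < π/2, the strength function satisfies Λ(A, P_x) = λ₁λ₂ / (λ₁ sin²α + λ₂ cos²α) when λ₁, λ₂ > 0, where P_x is the projection onto ℂ·x. -/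
noncomputable section

/-! In the orthonormal basis `x₁, x₂` the effect is `diag(λ₁, λ₂)`, and `λ P_x ≤ A` reads
`λ |cos α · a + sin α · b|² ≤ λ₁ |a|² + λ₂ |b|²` for all `a, b`. By the weighted Cauchy–Schwarz
inequality `(c a + s b)² ≤ (c²/λ₁ + s²/λ₂)(λ₁ a² + λ₂ b²)`, with equality at
`(a, b) ∝ (c/λ₁, s/λ₂)`, i.e. at `A⁻¹x`, this holds iff `λ ⟨x, A⁻¹x⟩ ≤ 1`, and
`⟨x, A⁻¹x⟩ = (λ₁ sin²α + λ₂ cos²α) / (λ₁λ₂)`. -/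

open scoped InnerProductSpace
open Module

section Hilbert

variable {H : Type*} [NormedAddCommGroup H] [InnerProductSpace ℂ H]

theorem strength_eq_of_isPositive_iff [CompleteSpace H] {B Q : H →L[ℂ] H} {k : ℝ} (hk : 0 ≤ k)
    (h : ∀ l : ℝ, 0 ≤ l → ((B - (l : ℂ) • Q).IsPositive ↔ l ≤ k)) : strength B Q = k := by
  have hset : {l : ℝ | 0 ≤ l ∧ (B - (l : ℂ) • Q).IsPositive} = Set.Icc 0 k :=
    Set.ext fun l => and_congr_right (h l)
  rw [strength, hset, csSup_Icc hk]

theorem isPositive_sub_ofReal_smul_iff [CompleteSpace H] {B Q : H →L[ℂ] H}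
    (hB : IsSelfAdjoint B) (hQ : IsSelfAdjoint Q) (l : ℝ) :
    (B - (l : ℂ) • Q).IsPositive ↔ ∀ y, l * Q.reApplyInnerSelf y ≤ B.reApplyInnerSelf y := by
  have hsa : IsSelfAdjoint (B - (l : ℂ) • Q) :=
    hB.sub ((IsSelfAdjoint.algebraMap ℂ (.all l)).smul hQ)
  rw [ContinuousLinearMap.isPositive_def', and_iff_right hsa]
  refine forall_congr' fun y => ?_
  simp only [ContinuousLinearMap.reApplyInnerSelf_apply, sub_apply,
    smul_apply, inner_sub_left, inner_smul_left, Complex.conj_ofReal, map_sub,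
    RCLike.re_to_complex, Complex.re_ofReal_mul, sub_nonneg]

theorem ContinuousLinearMap.reApplyInnerSelf_smul_add_smul_one_sub (T : H →L[ℂ] H) (a b : ℝ)
    (y : H) :
    ((a : ℂ) • T + (b : ℂ) • (1 - T)).reApplyInnerSelf y =
      a * T.reApplyInnerSelf y + b * (‖y‖ ^ 2 - T.reApplyInnerSelf y) := by
  rw [← inner_self_eq_norm_sq (𝕜 := ℂ)]
  simp only [reApplyInnerSelf_apply, add_apply, sub_apply, smul_apply, one_apply_eq_self,
    inner_add_left, inner_sub_left, inner_smul_left, Complex.conj_ofReal, RCLike.re_to_complex,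
    Complex.add_re, Complex.sub_re, Complex.re_ofReal_mul]

theorem IsSelfAdjoint.ofReal_smul_add_ofReal_smul_one_sub [CompleteSpace H] {T : H →L[ℂ] H}
    (hT : IsSelfAdjoint T) (a b : ℝ) : IsSelfAdjoint ((a : ℂ) • T + (b : ℂ) • (1 - T)) :=
  ((IsSelfAdjoint.algebraMap ℂ (.all a)).smul hT).add
    ((IsSelfAdjoint.algebraMap ℂ (.all b)).smul ((IsSelfAdjoint.one _).sub hT))

theorem reApplyInnerSelf_starProjection_span_singleton {u : H} (hu : ‖u‖ = 1) (y : H) :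
    (ℂ ∙ u).starProjection.reApplyInnerSelf y = Complex.normSq ⟪u, y⟫_ℂ := by
  rw [ContinuousLinearMap.reApplyInnerSelf_apply, Submodule.starProjection_unit_singleton ℂ hu,
    inner_smul_left, ← Complex.normSq_eq_conj_mul_self]
  rfl

theorem IsRankOneProjection.eq_starProjection_span_singleton [CompleteSpace H] {P : H →L[ℂ] H}
    (hP : IsRankOneProjection P) {u : H} (hu : u ∈ LinearMap.range (P : H →ₗ[ℂ] H))
    (hu1 : ‖u‖ = 1) : P = (ℂ ∙ u).starProjection := by
  obtain ⟨hsa, hidem, hrank⟩ := hP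
  have hPu : P u = u := by
    obtain ⟨v, rfl⟩ := hu
    exact congrArg (· v) hidem
  ext y
  obtain ⟨k, hk⟩ := (finrank_eq_one_iff_of_nonzero' (⟨u, hu⟩ : LinearMap.range (P : H →ₗ[ℂ] H))
    (by simp [← norm_ne_zero_iff, hu1])).mp hrank ⟨P y, LinearMap.mem_range_self _ y⟩
  have hPy : P y = k • u := (congrArg Subtype.val hk).symm
  have hk : k = ⟪u, y⟫_ℂ :=
    calc k = ⟪u, k • u⟫_ℂ := by simp [inner_self_eq_norm_sq_to_K, hu1]
      _ = ⟪u, P y⟫_ℂ := by rw [hPy]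
      _ = ⟪P u, y⟫_ℂ := (hsa.isSymmetric u y).symm
      _ = ⟪u, y⟫_ℂ := by rw [hPu]
  rw [Submodule.starProjection_unit_singleton ℂ hu1, hPy, hk]

section OrthonormalPair

variable {u v : H} (huv : Orthonormal ℂ ![u, v])
include huv

theorem Orthonormal.inner_fst_smul_add_smul (a b : ℂ) : ⟪u, a • u + b • v⟫_ℂ = a := by
  simpa only [Fin.sum_univ_two, Matrix.cons_val_zero, Matrix.cons_val_one]
    using huv.inner_right_fintype ![a, b] 0

theorem Orthonormal.inner_snd_smul_add_smul (a b : ℂ) : ⟪v, a • u + b • v⟫_ℂ = b := by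
  simpa only [Fin.sum_univ_two, Matrix.cons_val_zero, Matrix.cons_val_one]
    using huv.inner_right_fintype ![a, b] 1

theorem Orthonormal.norm_cos_smul_add_sin_smul (α : ℝ) :
    ‖(Real.cos α : ℂ) • u + (Real.sin α : ℂ) • v‖ = 1 := by
  rw [← pow_eq_one_iff_of_nonneg (norm_nonneg _) two_ne_zero, ← inner_self_eq_norm_sq (𝕜 := ℂ),
    inner_add_left, inner_smul_left, inner_smul_left, huv.inner_fst_smul_add_smul,
    huv.inner_snd_smul_add_smul]
  simp only [Complex.conj_ofReal, ← sq, ← Complex.ofReal_pow, ← Complex.ofReal_add,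
    Real.cos_sq_add_sin_sq, Complex.ofReal_one, RCLike.one_re]

theorem Orthonormal.forall_inner_pair_iff {p : ℂ → ℂ → Prop} :
    (∀ y, p ⟪u, y⟫_ℂ ⟪v, y⟫_ℂ) ↔ ∀ a b, p a b := by
  refine ⟨fun h a b => ?_, fun h y => h _ _⟩
  simpa [huv.inner_fst_smul_add_smul, huv.inner_snd_smul_add_smul] using h (a • u + b • v)

theorem Orthonormal.normSq_inner_add_normSq_inner (h2 : finrank ℂ H = 2) (y : H) :
    Complex.normSq ⟪u, y⟫_ℂ + Complex.normSq ⟪v, y⟫_ℂ = ‖y‖ ^ 2 := by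
  have : FiniteDimensional ℂ H := .of_finrank_eq_succ h2
  let b := (basisOfOrthonormalOfCardEqFinrank huv (by simp [h2])).toOrthonormalBasis
    (by simpa using huv)
  simpa [b, Fin.sum_univ_two, Complex.normSq_eq_norm_sq] using b.sum_sq_norm_inner_right y

end OrthonormalPair

end Hilbert

theorem forall_mul_normSq_le_iff {l₁ l₂ : ℝ} (h₁ : 0 < l₁) (h₂ : 0 < l₂) (c s : ℝ) {l : ℝ}
    (hl : 0 ≤ l) :
    (∀ a b : ℂ, l * Complex.normSq (c * a + s * b) ≤
        l₁ * Complex.normSq a + l₂ * Complex.normSq b) ↔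
      l * (l₁ * s ^ 2 + l₂ * c ^ 2) ≤ l₁ * l₂ := by
  set D := l₁ * s ^ 2 + l₂ * c ^ 2 with hD
  constructor
  · intro h
    have hext := h (c * l₂ : ℝ) (s * l₁ : ℝ)
    rw [← Complex.ofReal_mul, ← Complex.ofReal_mul, ← Complex.ofReal_add] at hext
    simp only [Complex.normSq_ofReal] at hext
    rcases (show 0 ≤ D by positivity).eq_or_lt with hD0 | hD0
    · rw [← hD0, mul_zero]
      positivity
    · refine le_of_mul_le_mul_right ?_ hD0
      nlinarith
  · intro h a b
    rw [Complex.normSq_eq_norm_sq, Complex.normSq_eq_norm_sq, Complex.normSq_eq_norm_sq]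
    set R := l₁ * ‖a‖ ^ 2 + l₂ * ‖b‖ ^ 2
    set W := |c| * ‖a‖ + |s| * ‖b‖
    have hnorm : ‖c * a + s * b‖ ^ 2 ≤ W ^ 2 := by
      refine pow_le_pow_left₀ (norm_nonneg _) ?_ 2
      simpa using norm_add_le (c * a) (s * b)
    have hcs : l₁ * l₂ * W ^ 2 ≤ D * R := by
      have hid : D * R - l₁ * l₂ * W ^ 2 = (l₂ * |c| * ‖b‖ - l₁ * |s| * ‖a‖) ^ 2 := by
        rw [hD, ← sq_abs c, ← sq_abs s]; ring
      linarith [sq_nonneg (l₂ * |c| * ‖b‖ - l₁ * |s| * ‖a‖)]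
    refine le_of_mul_le_mul_left ?_ (mul_pos h₁ h₂)
    calc l₁ * l₂ * (l * ‖c * a + s * b‖ ^ 2) ≤ l * (l₁ * l₂ * W ^ 2) := by
          nlinarith [mul_nonneg hl (mul_pos h₁ h₂).le]
      _ ≤ l * (D * R) := mul_le_mul_of_nonneg_left hcs hl
      _ = l * D * R := by ring
      _ ≤ l₁ * l₂ * R := mul_le_mul_of_nonneg_right h (by positivity)

open scoped RealInnerProductSpace in
theorem strength_of_qubit_effect_general (P : E2 →L[ℂ] E2) (hP : IsRankOneProjection P)
    (l1 l2 : ℝ) (hl1 : 0 < l1) (hl2 : 0 < l2)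
    (A : E2 →L[ℂ] E2) (hA : A = (l1 : ℂ) • P + (l2 : ℂ) • ((1 : E2 →L[ℂ] E2) - P))
    (x₁ x₂ : E2) (hx₁ : x₁ ∈ LinearMap.range (P : E2 →ₗ[ℂ] E2))
    (hx₁n : ‖x₁‖ = 1) (hx₂n : ‖x₂‖ = 1) (horth : inner ℂ x₁ x₂ = (0 : ℂ))
    (α : ℝ)
    (x : E2) (hx : x = ((Real.cos α : ℝ) : ℂ) • x₁ + ((Real.sin α : ℝ) : ℂ) • x₂)
    (Px : E2 →L[ℂ] E2)
    (hPx : Px = (ℂ ∙ x).subtypeL ∘L Submodule.orthogonalProjection (ℂ ∙ x)) :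
    strength A Px = l1 * l2 / (l1 * Real.sin α ^ 2 + l2 * Real.cos α ^ 2) := by
  have hon : Orthonormal ℂ ![x₁, x₂] := by simp [hx₁n, hx₂n, horth]
  have hparseval := hon.normSq_inner_add_normSq_inner (finrank_euclideanSpace_fin (n := 2))
  have hxn : ‖x‖ = 1 := hx ▸ hon.norm_cos_smul_add_sin_smul α
  have hD : 0 < l1 * Real.sin α ^ 2 + l2 * Real.cos α ^ 2 := by
    refine (lt_min hl1 hl2).trans_le ?_
    nlinarith [Real.sin_sq_add_cos_sq α, min_le_left l1 l2, min_le_right l1 l2,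
      sq_nonneg (Real.sin α), sq_nonneg (Real.cos α)]
  rw [hP.eq_starProjection_span_singleton hx₁ hx₁n] at hA
  have hAsa : IsSelfAdjoint A :=
    hA ▸ (isSelfAdjoint_starProjection _).ofReal_smul_add_ofReal_smul_one_sub l1 l2
  have hAform : ∀ y, A.reApplyInnerSelf y =
      l1 * Complex.normSq ⟪x₁, y⟫_ℂ + l2 * Complex.normSq ⟪x₂, y⟫_ℂ := fun y => by
    rw [hA, ContinuousLinearMap.reApplyInnerSelf_smul_add_smul_one_sub,
      reApplyInnerSelf_starProjection_span_singleton hx₁n, ← hparseval y]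
    ring
  have hPxform : ∀ y, Px.reApplyInnerSelf y =
      Complex.normSq (Real.cos α * ⟪x₁, y⟫_ℂ + Real.sin α * ⟪x₂, y⟫_ℂ) := fun y => by
    rw [hPx, ← Submodule.starProjection, reApplyInnerSelf_starProjection_span_singleton hxn, hx,
      inner_add_left, inner_smul_left, inner_smul_left, Complex.conj_ofReal, Complex.conj_ofReal]
  refine strength_eq_of_isPositive_iff (by positivity) fun l hl => ?_
  rw [isPositive_sub_ofReal_smul_iff hAsa (hPx ▸ isSelfAdjoint_starProjection _), le_div_iff₀ hD,
    ← forall_mul_normSq_le_iff hl1 hl2 _ _ hl, ← hon.forall_inner_pair_iff]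
  simp only [hAform, hPxform]

open scoped RealInnerProductSpace in
theorem strength_of_qubit_effect (P : E2 →L[ℂ] E2) (hP : IsRankOneProjection P)
    (l1 l2 : ℝ) (hl1 : 0 < l1) (hl1' : l1 ≤ 1) (hl2 : 0 < l2) (hl2' : l2 ≤ 1) (hne : l1 ≠ l2)
    (A : E2 →L[ℂ] E2) (hA : A = (l1 : ℂ) • P + (l2 : ℂ) • ((1 : E2 →L[ℂ] E2) - P))
    (x₁ x₂ : E2) (hx₁ : x₁ ∈ LinearMap.range (P : E2 →ₗ[ℂ] E2))
    (hx₁n : ‖x₁‖ = 1) (hx₂n : ‖x₂‖ = 1) (horth : inner ℂ x₁ x₂ = (0 : ℂ))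
    (α : ℝ) (hα : 0 < α) (hα' : α < Real.pi / 2)
    (x : E2) (hx : x = ((Real.cos α : ℝ) : ℂ) • x₁ + ((Real.sin α : ℝ) : ℂ) • x₂)
    (Px : E2 →L[ℂ] E2)
    (hPx : Px = (ℂ ∙ x).subtypeL ∘L Submodule.orthogonalProjection (ℂ ∙ x)) :
    strength A Px = l1 * l2 / (l1 * Real.sin α ^ 2 + l2 * Real.cos α ^ 2) :=
  strength_of_qubit_effect_general P hP l1 l2 hl1 hl2 A hA x₁ x₂ hx₁ hx₁n hx₂n horth α x hx Px hPx
end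
end

section
/- The map F(x,y) = ((x-y)²/((1-x)x), (x-y)²/((1-y)y)) from the open triangle Δ = {(x,y) : 0 < y < x < 1} into ℝ² is injective. -/
/-!
Write `t = x - y` and `s = 1 - x - y`. Since `(1 - x) x - (1 - y) y = t s` and
`2 ((1 - x) x + (1 - y) y) = 1 - s² - t²`, the reciprocals of the two components of `F`
have difference `s / t` and sum `(1 / t² - (s / t)² - 1) / 2`. So `F` determines `s / t`,
then `t²`, hence `t > 0` and `s`, i.e. `x` and `y`.
-/

section Reciprocals

variable {K : Type*} [Field K] {x y : K}

theorem one_sub_mul_div_sub_sq_sub (hxy : x ≠ y) :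
    (1 - x) * x / (x - y) ^ 2 - (1 - y) * y / (x - y) ^ 2 = (1 - x - y) / (x - y) := by
  have ht : x - y ≠ 0 := sub_ne_zero.mpr hxy
  field_simp
  ring

theorem one_sub_mul_div_sub_sq_add (hxy : x ≠ y) :
    2 * ((1 - x) * x / (x - y) ^ 2 + (1 - y) * y / (x - y) ^ 2) =
      ((x - y) ^ 2)⁻¹ - ((1 - x - y) / (x - y)) ^ 2 - 1 := by
  have ht : x - y ≠ 0 := sub_ne_zero.mpr hxy
  field_simp
  ring

end Reciprocals

theorem F_injective_on_triangle :
    Set.InjOn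
      (fun p : ℝ × ℝ =>
        ((p.1 - p.2) ^ 2 / ((1 - p.1) * p.1), (p.1 - p.2) ^ 2 / ((1 - p.2) * p.2)))
      {p : ℝ × ℝ | 0 < p.2 ∧ p.2 < p.1 ∧ p.1 < 1} := by
  rintro ⟨x, y⟩ ⟨-, hyx, -⟩ ⟨u, v⟩ ⟨-, hvu, -⟩ heq
  simp only [Prod.mk.injEq] at heq ⊢
  have h1 := congrArg Inv.inv heq.1
  have h2 := congrArg Inv.inv heq.2
  simp only [inv_div] at h1 h2
  have hratio : (1 - x - y) / (x - y) = (1 - u - v) / (u - v) := by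
    rw [← one_sub_mul_div_sub_sq_sub hyx.ne', ← one_sub_mul_div_sub_sq_sub hvu.ne', h1, h2]
  have hsq : ((x - y) ^ 2)⁻¹ = ((u - v) ^ 2)⁻¹ := by
    have := one_sub_mul_div_sub_sq_add hyx.ne'
    rw [h1, h2, one_sub_mul_div_sub_sq_add hvu.ne', hratio] at this
    linear_combination -this
  have hdiff : x - y = u - v :=
    (pow_left_inj₀ (sub_pos.mpr hyx).le (sub_pos.mpr hvu).le two_ne_zero).mp (inv_inj.mp hsq)
  have hsum : 1 - x - y = 1 - u - v := by
    rwa [hdiff, div_left_inj' (sub_pos.mpr hvu).ne'] at hratio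
  constructor <;> linarith
end

section
/- Let A, B be effects on a Hilbert space H. If B is a convex combination of A, I - A, 0, and I, then every effect coexistent with A is also coexistent with B. -/
noncomputable section

/-!
Coexistence with a fixed effect `C` is a convex condition on `X`: averaging two decompositions
`C = M₁ + N₁` and `C = M₂ + N₂` with the same weights decomposes `C` for the averaged `X`.
Swapping `M` and `N` shows that `X` and `1 - X` are coexistent with the same effects, and `0`, `1`
are coexistent with every effect, so every convex combination of `A`, `1 - A`, `0`, `1` is too.
-/

section

open ContinuousLinearMap

variable {H : Type*} [NormedAddCommGroup H] [InnerProductSpace ℂ H] [CompleteSpace H]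

theorem isEffect_iff_mem_Icc {A : H →L[ℂ] H} : IsEffect A ↔ A ∈ Set.Icc 0 1 := by
  rw [IsEffect, Set.mem_Icc, nonneg_iff_isPositive, le_def]

theorem coexistent_iff {X C : H →L[ℂ] H} :
    Coexistent X C ↔
      ∃ M N, IsEffect M ∧ IsEffect N ∧ M ≤ X ∧ N ≤ 1 - X ∧ M + N = C := by
  simp only [Coexistent, le_def]

theorem Coexistent.one_sub {X C : H →L[ℂ] H} (h : Coexistent X C) : Coexistent (1 - X) C := by
  obtain ⟨M, N, hM, hN, hXM, hXN, rfl⟩ := h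
  exact ⟨N, M, hN, hM, hXN, by rwa [sub_sub_cancel], add_comm N M⟩

theorem coexistent_zero {C : H →L[ℂ] H} (hC : IsEffect C) : Coexistent 0 C :=
  coexistent_iff.2 ⟨0, C, isEffect_iff_mem_Icc.2 ⟨le_rfl, zero_le_one⟩, hC, le_rfl,
    by simpa using (isEffect_iff_mem_Icc.1 hC).2, zero_add C⟩

theorem coexistent_one {C : H →L[ℂ] H} (hC : IsEffect C) : Coexistent 1 C := by
  simpa using (coexistent_zero hC).one_sub

theorem convex_setOf_coexistent (C : H →L[ℂ] H) : Convex ℝ {X : H →L[ℂ] H | Coexistent X C} := by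
  rintro X hX Y hY s t hs ht hst
  obtain ⟨M₁, N₁, hM₁, hN₁, hXM₁, hXN₁, hC₁⟩ := coexistent_iff.1 hX
  obtain ⟨M₂, N₂, hM₂, hN₂, hYM₂, hYN₂, hC₂⟩ := coexistent_iff.1 hY
  have combo_mono {P₁ P₂ Q₁ Q₂ : H →L[ℂ] H} (h₁ : P₁ ≤ Q₁) (h₂ : P₂ ≤ Q₂) :
      s • P₁ + t • P₂ ≤ s • Q₁ + t • Q₂ :=
    add_le_add (smul_le_smul_of_nonneg_left h₁ hs) (smul_le_smul_of_nonneg_left h₂ ht)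
  have combo_isEffect {P Q : H →L[ℂ] H} (hP : IsEffect P) (hQ : IsEffect Q) :
      IsEffect (s • P + t • Q) :=
    isEffect_iff_mem_Icc.2 <|
      convex_Icc 0 1 (isEffect_iff_mem_Icc.1 hP) (isEffect_iff_mem_Icc.1 hQ) hs ht hst
  have one_sub_combo : 1 - (s • X + t • Y) = s • (1 - X) + t • (1 - Y) := by
    rw [smul_sub, smul_sub, sub_add_sub_comm, Convex.combo_self hst]
  refine coexistent_iff.2 ⟨s • M₁ + t • M₂, s • N₁ + t • N₂, combo_isEffect hM₁ hM₂,
    combo_isEffect hN₁ hN₂, combo_mono hXM₁ hYM₂, one_sub_combo ▸ combo_mono hXN₁ hYN₂, ?_⟩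
  calc s • M₁ + t • M₂ + (s • N₁ + t • N₂) = s • (M₁ + N₁) + t • (M₂ + N₂) := by module
    _ = C := by rw [hC₁, hC₂, Convex.combo_self hst]

end

theorem coexistent_subset_of_convex_combination_general {H : Type*} [NormedAddCommGroup H]
    [InnerProductSpace ℂ H] [CompleteSpace H] (A B : H →L[ℂ] H)
    (a b c d : ℝ) (ha : 0 ≤ a) (hb : 0 ≤ b) (hc : 0 ≤ c) (hd : 0 ≤ d)
    (hsum : a + b + c + d = 1)
    (hB : B = (a : ℂ) • A + (b : ℂ) • ((1 : H →L[ℂ] H) - A) +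
      (c : ℂ) • (0 : H →L[ℂ] H) + (d : ℂ) • (1 : H →L[ℂ] H)) :
    ∀ C : H →L[ℂ] H, IsEffect C → Coexistent A C → Coexistent B C := by
  intro C hC hAC
  have hB_sum : B = ∑ i, ![a, b, c, d] i • ![A, 1 - A, 0, 1] i := by
    simp [hB, Fin.sum_univ_four, Complex.coe_smul]
  rw [hB_sum]
  refine (convex_setOf_coexistent C).sum_mem (fun i _ ↦ ?_) (by simpa [Fin.sum_univ_four]) ?_
  · fin_cases i <;> assumption
  · intro i _
    fin_cases i
    exacts [hAC, hAC.one_sub, coexistent_zero hC, coexistent_one hC]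

theorem coexistent_subset_of_convex_combination {H : Type*} [NormedAddCommGroup H]
    [InnerProductSpace ℂ H] [CompleteSpace H] (A B : H →L[ℂ] H) (hA : IsEffect A)
    (a b c d : ℝ) (ha : 0 ≤ a) (hb : 0 ≤ b) (hc : 0 ≤ c) (hd : 0 ≤ d)
    (hsum : a + b + c + d = 1)
    (hB : B = (a : ℂ) • A + (b : ℂ) • ((1 : H →L[ℂ] H) - A) +
      (c : ℂ) • (0 : H →L[ℂ] H) + (d : ℂ) • (1 : H →L[ℂ] H)) :
    ∀ C : H →L[ℂ] H, IsEffect C → Coexistent A C → Coexistent B C :=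
  coexistent_subset_of_convex_combination_general A B a b c d ha hb hc hd hsum hB
end
end

section
/- Let A be an effect on ℂ². There exists no effect B on ℂ² with B^∼ strictly contained in A^∼ if and only if A is a rank-one projection, where X^∼ denotes the set of effects coexistent with X. -/
noncomputable section

/-!
Coexistence with a projection `P` forces commutation with `P`, since an effect below `P` or
below `1 - P` commutes with `P`; conversely, commuting effects are always coexistent. On `ℂ²`
the operators commuting with a rank-one projection `P` are the ones diagonal in an eigenbasis of
`P`, so they commute with each other. Hence if `A` is a rank-one projection and `B^∼ ⊆ A^∼`, then
`B ∈ A^∼` commutes with `A`, and every element of `A^∼` commutes with `A`, hence with `B`, hence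
lies in `B^∼`. If `A` is not a rank-one projection, let `P` be the projection onto an eigenline
of `A`: every element of `P^∼` commutes with `P`, hence with `A`, so `P^∼ ⊆ A^∼`; and the
eigenvalues of `A` give some `c > 0` with `c ≤ A` or `c ≤ 1 - A`, so `c D ∈ A^∼` for every
effect `D`, in particular for one that does not commute with `P`.
-/
open ContinuousLinearMap InnerProductSpace Module
open scoped InnerProductSpace

section Effects

variable {H : Type*} [NormedAddCommGroup H] [InnerProductSpace ℂ H] [CompleteSpace H]

lemma isEffect_iff {A : H →L[ℂ] H} : IsEffect A ↔ 0 ≤ A ∧ A ≤ 1 := by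
  rw [IsEffect, nonneg_iff_isPositive]
  rfl

lemma IsStarProjection.isEffect {P : H →L[ℂ] H} (hP : IsStarProjection P) : IsEffect P :=
  isEffect_iff.2 ⟨hP.nonneg, sub_nonneg.1 hP.one_sub.nonneg⟩

lemma Coexistent.of_le {A C : H →L[ℂ] H} (hA : IsEffect A) (hC : IsEffect C) (hCA : C ≤ A) :
    Coexistent A C :=
  ⟨C, 0, hC, isEffect_iff.2 ⟨le_rfl, zero_le_one⟩, hCA, by simpa using hA.2, add_zero C⟩

lemma Coexistent.of_le_one_sub {A C : H →L[ℂ] H} (hA : IsEffect A) (hC : IsEffect C)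
    (hCA : C ≤ 1 - A) : Coexistent A C :=
  ⟨0, C, isEffect_iff.2 ⟨le_rfl, zero_le_one⟩, hC, by simpa using hA.1, hCA, zero_add C⟩

/-- The witnesses are `M = A C` and `N = (1 - A) C`; all the required inequalities are
positivity of products of commuting positive operators. -/
lemma Commute.coexistent {A C : H →L[ℂ] H} (hAC : Commute A C) (hA : IsEffect A)
    (hC : IsEffect C) : Coexistent A C := by
  obtain ⟨hA0, hA1⟩ := isEffect_iff.1 hA
  obtain ⟨hC0, hC1⟩ := isEffect_iff.1 hC
  have hA1' : 0 ≤ 1 - A := sub_nonneg.2 hA1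
  have hC1' : 0 ≤ 1 - C := sub_nonneg.2 hC1
  have hAC' : Commute (1 - A) C := (Commute.one_left C).sub_left hAC
  have hMA : A * C ≤ A := by
    simpa [mul_sub] using ((Commute.one_right A).sub_right hAC).mul_nonneg hA0 hC1'
  have hNA : (1 - A) * C ≤ 1 - A := by
    simpa [mul_sub] using ((Commute.one_right (1 - A)).sub_right hAC').mul_nonneg hA1' hC1'
  refine ⟨A * C, (1 - A) * C, isEffect_iff.2 ⟨hAC.mul_nonneg hA0 hC0, hMA.trans hA1⟩,
    isEffect_iff.2 ⟨hAC'.mul_nonneg hA1' hC0, hNA.trans (sub_le_self 1 hA0)⟩, hMA, hNA, ?_⟩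
  noncomm_ring

lemma Coexistent.commute {P C : H →L[ℂ] H} (hPC : Coexistent P C) (hP : IsStarProjection P) :
    Commute P C := by
  obtain ⟨M, N, hM, hN, hMP, hNP, rfl⟩ := hPC
  obtain ⟨hMP₁, hMP₂⟩ := hP.mul_right_and_mul_left_of_nonneg_of_le (isEffect_iff.1 hM).1 hMP
  obtain ⟨hNP₁, hNP₂⟩ :=
    hP.one_sub.mul_right_and_mul_left_of_nonneg_of_le (isEffect_iff.1 hN).1 hNP
  have hPM : Commute P M := hMP₂.trans hMP₁.symm
  have hPN : Commute (1 - P) N := hNP₂.trans hNP₁.symm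
  refine hPM.add_right ?_
  simpa using (Commute.one_left N).sub_left hPN

end Effects

section RankOne

variable {H : Type*} [NormedAddCommGroup H] [InnerProductSpace ℂ H] [CompleteSpace H]

lemma IsRankOneProjection.isStarProjection {P : H →L[ℂ] H} (hP : IsRankOneProjection P) :
    IsStarProjection P :=
  ⟨hP.2.1, hP.1⟩

lemma isRankOneProjection_rankOne_self {e : H} (he : ‖e‖ = 1) :
    IsRankOneProjection (rankOne ℂ e e) := by
  have he0 : e ≠ 0 := norm_ne_zero_iff.1 (by rw [he]; exact one_ne_zero)
  obtain ⟨hidem, hsa⟩ := isStarProjection_rankOne_self (𝕜 := ℂ) he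
  exact ⟨hsa, hidem, Module.rank_eq_one_iff_finrank_eq_one.1 (rank_rankOne he0 he0)⟩

lemma IsRankOneProjection.exists_eq_rankOne_self {P : H →L[ℂ] H} (hP : IsRankOneProjection P) :
    ∃ e : H, ‖e‖ = 1 ∧ P = rankOne ℂ e e := by
  obtain ⟨_, hPK⟩ := isStarProjection_iff_eq_starProjection_range.1 hP.isStarProjection
  have hK : finrank ℂ P.range = 1 := hP.2.2
  have : FiniteDimensional ℂ P.range := Module.finite_of_finrank_eq_succ hK
  let b := (stdOrthonormalBasis ℂ P.range).reindex (finCongr hK)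
  refine ⟨b 0, b.norm_eq_one 0, ?_⟩
  calc P = P.range.starProjection := hPK
    _ = rankOne ℂ (b 0 : H) (b 0 : H) := by rw [b.starProjection_eq_sum_rankOne, Fin.sum_univ_one]

end RankOne

namespace OrthonormalBasis

variable {H ι : Type*} [NormedAddCommGroup H] [InnerProductSpace ℂ H] [Fintype ι]
  (b : OrthonormalBasis ι ℂ H)

lemma commute_rankOne_self (i j : ι) :
    Commute (rankOne ℂ (b i) (b i)) (rankOne ℂ (b j) (b j)) := by
  obtain rfl | hij := eq_or_ne i j
  · rfl
  · change rankOne ℂ (b i) (b i) ∘L rankOne ℂ (b j) (b j) =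
      rankOne ℂ (b j) (b j) ∘L rankOne ℂ (b i) (b i)
    rw [rankOne_comp_rankOne, rankOne_comp_rankOne, b.orthonormal.2 hij, b.orthonormal.2 hij.symm,
      zero_smul, zero_smul]

lemma eq_sum_smul_rankOne_of_apply_eq {A : H →L[ℂ] H} {μ : ι → ℂ}
    (hA : ∀ i, A (b i) = μ i • b i) : A = ∑ i, μ i • rankOne ℂ (b i) (b i) := by
  calc A = A ∘L ∑ i, rankOne ℂ (b i) (b i) := by rw [b.sum_rankOne_eq_id, comp_id]
    _ = ∑ i, μ i • rankOne ℂ (b i) (b i) := by simp [comp_finsetSum, comp_rankOne, hA]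

lemma rankOne_one_eq_one_sub (b : OrthonormalBasis (Fin 2) ℂ H) :
    rankOne ℂ (b 1) (b 1) = 1 - rankOne ℂ (b 0) (b 0) := by
  rw [eq_sub_iff_add_eq', ← Fin.sum_univ_two (fun i => rankOne ℂ (b i) (b i)),
    b.sum_rankOne_eq_id, one_def]

end OrthonormalBasis

lemma apply_eq_inner_smul_of_commute_rankOne {H : Type*} [NormedAddCommGroup H]
    [InnerProductSpace ℂ H] {e : H} (he : ‖e‖ = 1) {B : H →L[ℂ] H}
    (hB : Commute (rankOne ℂ e e) B) : B e = ⟪e, B e⟫_ℂ • e := by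
  have hee : rankOne ℂ e e e = e := by simp [inner_self_eq_norm_sq_to_K, he]
  calc B e = B (rankOne ℂ e e e) := by rw [hee]
    _ = rankOne ℂ e e (B e) := congr($(hB.eq.symm) e)
    _ = ⟪e, B e⟫_ℂ • e := rankOne_apply ..

section DimTwo

variable {H : Type*} [NormedAddCommGroup H] [InnerProductSpace ℂ H] [CompleteSpace H]

lemma IsRankOneProjection.exists_orthonormalBasis (hH : finrank ℂ H = 2) {P : H →L[ℂ] H}
    (hP : IsRankOneProjection P) : ∃ b : OrthonormalBasis (Fin 2) ℂ H,
      P = rankOne ℂ (b 0) (b 0) := by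
  have : FiniteDimensional ℂ H := Module.finite_of_finrank_pos (by omega)
  obtain ⟨e, he, rfl⟩ := hP.exists_eq_rankOne_self
  have he' : Orthonormal ℂ (({0} : Set (Fin 2)).domRestrict fun _ => e) :=
    orthonormal_subsingleton_iff.2 fun _ => he
  obtain ⟨b, hb⟩ := he'.exists_orthonormalBasis_extension_of_card_eq (by rw [hH, Fintype.card_fin])
  exact ⟨b, by rw [hb 0 rfl]⟩

lemma IsRankOneProjection.commute_of_commute (hH : finrank ℂ H = 2) {P B C : H →L[ℂ] H}
    (hP : IsRankOneProjection P) (hB : Commute P B) (hC : Commute P C) : Commute B C := by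
  obtain ⟨b, rfl⟩ := hP.exists_orthonormalBasis hH
  have hdiag : ∀ X : H →L[ℂ] H, Commute (rankOne ℂ (b 0) (b 0)) X →
      X = ∑ i, ⟪b i, X (b i)⟫_ℂ • rankOne ℂ (b i) (b i) := by
    intro X hX
    refine b.eq_sum_smul_rankOne_of_apply_eq fun i => ?_
    refine apply_eq_inner_smul_of_commute_rankOne (b.norm_eq_one i) ?_
    fin_cases i
    · exact hX
    · simpa [b.rankOne_one_eq_one_sub] using (Commute.one_left X).sub_left hX
  rw [hdiag B hB, hdiag C hC]
  exact .sum_left _ _ _ fun i _ => .sum_right _ _ _ fun j _ =>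
    ((b.commute_rankOne_self i j).smul_left _).smul_right _

lemma IsSelfAdjoint.exists_isRankOneProjection_commute (hH : finrank ℂ H = 2) {A : H →L[ℂ] H}
    (hA : IsSelfAdjoint A) : ∃ P, IsRankOneProjection P ∧ Commute P A := by
  have : FiniteDimensional ℂ H := Module.finite_of_finrank_pos (by omega)
  set b := hA.isSymmetric.eigenvectorBasis hH
  refine ⟨rankOne ℂ (b 0) (b 0), isRankOneProjection_rankOne_self (b.norm_eq_one 0), ?_⟩
  rw [b.eq_sum_smul_rankOne_of_apply_eq (hA.isSymmetric.apply_eigenvectorBasis hH)]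
  exact .sum_right _ _ _ fun i _ => (b.commute_rankOne_self 0 i).smul_right _

/-- With eigenvalues `μ₁ ≤ μ₀` in `[0, 1]`, either `μ₁ > 0`, or `μ₀ < 1`, or `A` is the
projection onto the `μ₀`-eigenline. -/
lemma IsEffect.exists_pos_smul_one_le (hH : finrank ℂ H = 2) {A : H →L[ℂ] H} (hA : IsEffect A)
    (hA₁ : ¬ IsRankOneProjection A) : ∃ c : ℝ, 0 < c ∧ (c • 1 ≤ A ∨ c • 1 ≤ 1 - A) := by
  have : FiniteDimensional ℂ H := Module.finite_of_finrank_pos (by omega)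
  have hT := hA.1.isSelfAdjoint.isSymmetric
  set b := hT.eigenvectorBasis hH
  set μ := hT.eigenvalues hH
  have hAb : ∀ i, A (b i) = (μ i : ℂ) • b i := hT.apply_eigenvectorBasis hH
  have hμ : μ 1 ≤ μ 0 := hT.eigenvalues_antitone hH (by decide)
  have hμ_mem : ∀ i, 0 ≤ μ i ∧ μ i ≤ 1 := fun i => by
    simpa [hAb, inner_sub_left, inner_smul_left_eq_smul, inner_self_eq_norm_sq_to_K,
      b.norm_eq_one] using And.intro (hA.1.re_inner_nonneg_left (b i))
        (hA.2.re_inner_nonneg_left (b i))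
  set P := rankOne ℂ (b 0) (b 0)
  have hP : IsRankOneProjection P := isRankOneProjection_rankOne_self (b.norm_eq_one 0)
  have hAP : A = μ 0 • P + μ 1 • (1 - P) := by
    rw [b.eq_sum_smul_rankOne_of_apply_eq hAb, Fin.sum_univ_two, b.rankOne_one_eq_one_sub]
    simp only [Complex.coe_smul, P]
  by_cases h₁ : 0 < μ 1
  · refine ⟨μ 1, h₁, Or.inl (sub_nonneg.1 ?_)⟩
    rw [show A - μ 1 • 1 = (μ 0 - μ 1) • P by rw [hAP]; module]
    exact smul_nonneg (sub_nonneg.2 hμ) hP.isStarProjection.nonneg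
  by_cases h₀ : μ 0 < 1
  · refine ⟨1 - μ 0, sub_pos.2 h₀, Or.inr (sub_nonneg.1 ?_)⟩
    rw [show 1 - A - (1 - μ 0) • 1 = (μ 0 - μ 1) • (1 - P) by rw [hAP]; module]
    exact smul_nonneg (sub_nonneg.2 hμ) hP.isStarProjection.one_sub.nonneg
  refine absurd ?_ hA₁
  rw [hAP, le_antisymm (not_lt.1 h₁) (hμ_mem 1).1, le_antisymm (hμ_mem 0).2 (not_lt.1 h₀)]
  simpa using hP

lemma IsRankOneProjection.exists_isEffect_not_commute (hH : finrank ℂ H = 2) {P : H →L[ℂ] H}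
    (hP : IsRankOneProjection P) : ∃ D, IsEffect D ∧ ¬ Commute P D := by
  obtain ⟨b, rfl⟩ := hP.exists_orthonormalBasis hH
  refine ⟨(ℂ ∙ (b 0 + b 1)).starProjection, isStarProjection_starProjection.isEffect, fun h => ?_⟩
  have h₀₁ : ⟪b 0, b 1⟫_ℂ = 0 := b.orthonormal.2 (by decide)
  have h₁₀ : ⟪b 1, b 0⟫_ℂ = 0 := b.orthonormal.2 (by decide)
  have hv : b 0 + b 1 ≠ 0 := fun hv => by
    simpa [h₀₁, inner_self_eq_norm_sq_to_K] using congr(⟪b 0, $hv⟫_ℂ)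
  simpa [Submodule.starProjection_singleton, inner_add_left, inner_add_right, inner_smul_right,
    h₀₁, h₁₀, inner_self_eq_norm_sq_to_K, hv] using congr(⟪b 1, $(h.eq.symm) (b 0)⟫_ℂ)

lemma IsEffect.exists_coexistent_not_commute (hH : finrank ℂ H = 2) {A P : H →L[ℂ] H}
    (hA : IsEffect A) (hA₁ : ¬ IsRankOneProjection A) (hP : IsRankOneProjection P) :
    ∃ C, IsEffect C ∧ Coexistent A C ∧ ¬ Commute P C := by
  obtain ⟨hA0, hA1⟩ := isEffect_iff.1 hA
  obtain ⟨c, hc, hcA⟩ := hA.exists_pos_smul_one_le hH hA₁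
  obtain ⟨D, hD, hPD⟩ := hP.exists_isEffect_not_commute hH
  have hcD : c • D ≤ c • 1 := smul_le_smul_of_nonneg_left (isEffect_iff.1 hD).2 hc.le
  have hc1 : c • (1 : H →L[ℂ] H) ≤ 1 := hcA.elim (·.trans hA1) (·.trans (sub_le_self 1 hA0))
  have hC : IsEffect (c • D) :=
    isEffect_iff.2 ⟨smul_nonneg hc.le (isEffect_iff.1 hD).1, hcD.trans hc1⟩
  refine ⟨c • D, hC, ?_, fun h => hPD ?_⟩
  · rcases hcA with h | h
    exacts [.of_le hA hC (hcD.trans h), .of_le_one_sub hA hC (hcD.trans h)]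
  · simpa [hc.ne'] using h.smul_right c⁻¹

end DimTwo

theorem coexistent_set_minimal_iff_rank_one_projection (A : E2 →L[ℂ] E2)
    (hA : IsEffect A) :
    (¬ ∃ B : E2 →L[ℂ] E2, IsEffect B ∧
        {C : E2 →L[ℂ] E2 | IsEffect C ∧ Coexistent B C} ⊂
          {C : E2 →L[ℂ] E2 | IsEffect C ∧ Coexistent A C}) ↔
      IsRankOneProjection A := by
  have hH : finrank ℂ E2 = 2 := finrank_euclideanSpace_fin
  refine ⟨fun hmin => by_contra fun hA₁ => hmin ?_, fun hA₁ => ?_⟩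
  · obtain ⟨P, hP, hPA⟩ := hA.1.isSelfAdjoint.exists_isRankOneProjection_commute hH
    obtain ⟨C, hC, hAC, hPC⟩ := hA.exists_coexistent_not_commute hH hA₁ hP
    refine ⟨P, hP.isStarProjection.isEffect, fun D ⟨hD, hPD⟩ => ⟨hD, ?_⟩, fun hsub => ?_⟩
    · exact (hP.commute_of_commute hH hPA (hPD.commute hP.isStarProjection)).coexistent hA hD
    · exact hPC ((hsub ⟨hC, hAC⟩).2.commute hP.isStarProjection)
  · rintro ⟨B, hB, hsub, hsup⟩
    have hAB : Commute A B :=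
      (hsub ⟨hB, (Commute.refl B).coexistent hB hB⟩).2.commute hA₁.isStarProjection
    refine hsup fun C ⟨hC, hAC⟩ => ⟨hC, ?_⟩
    exact (hA₁.commute_of_commute hH hAB (hAC.commute hA₁.isStarProjection)).coexistent hB hC
end
end
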